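/- arXiv:cs/0406024 — 5 statements merged into one kernel-verified Lean document; each statement's English description precedes it below -/
import Mathlib

section
/- Every n-vertex graph G that has a t-track layout has a 2t × 4t × (4t·⌈n/t⌉) three-dimensional drawing; in particular, every graph has a drawing of dimensions O(tn(G)) × O(tn(G)) × O(n), where tn(G) is the track-number of G. -/
open SimpleGraph

/-- A (proper) track layout of the graph `G` with `t` tracks.
`track v` is the track (colour class) of vertex `v`, and `pos v` gives the
position of `v` in the total order of its track. -/
structure TrackLayout (V : Type) (G : SimpleGraph V) (t : ℕ) where
  /-- the track containing each vertex -/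
  track : V → Fin t
  /-- the position of each vertex within its track -/
  pos : V → ℕ
  /-- distinct vertices on a common track occupy distinct positions -/
  inj : ∀ v w : V, track v = track w → pos v = pos w → v = w
  /-- the tracks form a proper vertex colouring -/
  proper : ∀ v w : V, G.Adj v w → track v ≠ track w
  /-- no X-crossing: there are no edges `vw` and `xy` with `v, x` on one track,
  `w, y` on another track, `v <ᵢ x` and `y <ⱼ w` -/
  noX : ∀ v w x y : V, G.Adj v w → G.Adj x y →
    track v = track x → track w = track y → track v ≠ track w →
    pos v < pos x → pos y < pos w → False
/-- The track-number of `G`: the minimum `t` such that `G` has a `t`-track layout. -/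
noncomputable def trackNumber (V : Type) (G : SimpleGraph V) : ℕ :=
  sInf {t : ℕ | Nonempty (TrackLayout V G t)}
/-- The point of `ℝ³` corresponding to a grid-point of `ℤ³`. -/
def gridPt (p : Fin 3 → ℤ) : Fin 3 → ℝ := fun i => (p i : ℝ)

/-- A three-dimensional straight-line grid drawing of `G`: vertices are represented by
distinct points of `ℤ³`, edges by the closed segments between their end-vertices;
an edge only intersects a vertex that is an end-vertex of that edge, and two edge
segments intersect only at a common end-vertex. -/
structure Drawing3D (V : Type) (G : SimpleGraph V) where
  /-- the grid-point representing each vertex -/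
  pos : V → Fin 3 → ℤ
  inj : Function.Injective pos
  /-- an edge segment intersects a vertex point only at an end-vertex of the edge -/
  vertexDisjoint : ∀ v w x : V, G.Adj v w →
    gridPt (pos x) ∈ segment ℝ (gridPt (pos v)) (gridPt (pos w)) → x = v ∨ x = w
  /-- the segments of two distinct edges intersect only at a common end-vertex -/
  edgesDisjoint : ∀ v w x y : V, G.Adj v w → G.Adj x y →
    ¬ ((x = v ∧ y = w) ∨ (x = w ∧ y = v)) →
    ∀ p : Fin 3 → ℝ, p ∈ segment ℝ (gridPt (pos v)) (gridPt (pos w)) →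
      p ∈ segment ℝ (gridPt (pos x)) (gridPt (pos y)) →
      (p = gridPt (pos v) ∧ (v = x ∨ v = y)) ∨ (p = gridPt (pos w) ∧ (w = x ∨ w = y))

/-- The drawing fits in an axis-aligned box with side lengths `X-1`, `Y-1` and `Z-1`
(i.e. it is an `X × Y × Z` drawing). -/
def Drawing3D.InBox {V : Type} {G : SimpleGraph V} (D : Drawing3D V G)
    (X Y Z : ℕ) : Prop :=
  ∃ o : Fin 3 → ℤ, ∀ v : V,
    o 0 ≤ D.pos v 0 ∧ D.pos v 0 < o 0 + X ∧
    o 1 ≤ D.pos v 1 ∧ D.pos v 1 < o 1 + Y ∧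
    o 2 ≤ D.pos v 2 ∧ D.pos v 2 < o 2 + Z

/- ===== auxiliary machinery for the drawing construction ===== -/

section AuxAlgebra

private lemma natCast_inj_of_lt' {p a b : ℕ} (ha : a < p) (hb : b < p)
    (h : (a : ZMod p) = b) : a = b := by
  have := congrArg ZMod.val h
  rwa [ZMod.val_natCast_of_lt ha, ZMod.val_natCast_of_lt hb] at this

private lemma NC3 {p a b c : ℕ} (hp : p.Prime) (ha : a < p) (hb : b < p) (hc : c < p)
    (hab : a ≠ b) (hac : a ≠ c) (hbc : b ≠ c) :
    ((b : ℤ) - (a : ℤ)) * (((c ^ 2 % p : ℕ) : ℤ) - ((a ^ 2 % p : ℕ) : ℤ))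
      - (((b ^ 2 % p : ℕ) : ℤ) - ((a ^ 2 % p : ℕ) : ℤ)) * ((c : ℤ) - (a : ℤ)) ≠ 0 := by
  haveI : Fact p.Prime := ⟨hp⟩
  intro h
  have h2 := congrArg (fun z : ℤ => (z : ZMod p)) h
  push_cast at h2
  have h3 : ((b : ZMod p) - a) * ((c : ZMod p) - a) * ((c : ZMod p) - b) = 0 := by
    linear_combination h2
  have hA : (b : ZMod p) - a ≠ 0 :=
    sub_ne_zero.mpr fun e => hab (natCast_inj_of_lt' hb ha e).symm
  have hB : (c : ZMod p) - a ≠ 0 :=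
    sub_ne_zero.mpr fun e => hac (natCast_inj_of_lt' hc ha e).symm
  have hC : (c : ZMod p) - b ≠ 0 :=
    sub_ne_zero.mpr fun e => hbc (natCast_inj_of_lt' hc hb e).symm
  rcases mul_eq_zero.mp h3 with h4 | h4
  · rcases mul_eq_zero.mp h4 with h5 | h5 <;> [exact hA h5; exact hB h5]
  · exact hC h4

private lemma NC3R {p a b c : ℕ} (hIZ : ((b : ℤ) - (a : ℤ)) * (((c ^ 2 % p : ℕ) : ℤ) - ((a ^ 2 % p : ℕ) : ℤ))
      - (((b ^ 2 % p : ℕ) : ℤ) - ((a ^ 2 % p : ℕ) : ℤ)) * ((c : ℤ) - (a : ℤ)) ≠ 0) :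
    ((b : ℝ) - (a : ℝ)) * (((c ^ 2 % p : ℕ) : ℝ) - ((a ^ 2 % p : ℕ) : ℝ))
      - (((b ^ 2 % p : ℕ) : ℝ) - ((a ^ 2 % p : ℕ) : ℝ)) * ((c : ℝ) - (a : ℝ)) ≠ 0 := by
  intro h
  exact hIZ (by exact_mod_cast h)

private lemma NC4 {p a b c d ra rb rc rd : ℕ} (hp : p.Prime)
    (ha : a < p) (hb : b < p) (hc : c < p) (hd : d < p)
    (hab : a ≠ b) (hac : a ≠ c) (had : a ≠ d) (hbc : b ≠ c) (hbd : b ≠ d) (hcd : c ≠ d) :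
    (((b : ℤ) - a) * ((((c ^ 2 % p : ℕ) : ℤ) - ((a ^ 2 % p : ℕ) : ℤ)) *
          (((p * rd + d ^ 3 % p : ℕ) : ℤ) - ((p * ra + a ^ 3 % p : ℕ) : ℤ)) -
        (((p * rc + c ^ 3 % p : ℕ) : ℤ) - ((p * ra + a ^ 3 % p : ℕ) : ℤ)) *
          (((d ^ 2 % p : ℕ) : ℤ) - ((a ^ 2 % p : ℕ) : ℤ)))
      - (((b ^ 2 % p : ℕ) : ℤ) - ((a ^ 2 % p : ℕ) : ℤ)) * (((c : ℤ) - a) *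
          (((p * rd + d ^ 3 % p : ℕ) : ℤ) - ((p * ra + a ^ 3 % p : ℕ) : ℤ)) -
        (((p * rc + c ^ 3 % p : ℕ) : ℤ) - ((p * ra + a ^ 3 % p : ℕ) : ℤ)) * ((d : ℤ) - a))
      + (((p * rb + b ^ 3 % p : ℕ) : ℤ) - ((p * ra + a ^ 3 % p : ℕ) : ℤ)) * (((c : ℤ) - a) *
          ((((d ^ 2 % p : ℕ) : ℤ) - ((a ^ 2 % p : ℕ) : ℤ))) -
        (((c ^ 2 % p : ℕ) : ℤ) - ((a ^ 2 % p : ℕ) : ℤ)) * ((d : ℤ) - a))) ≠ 0 := by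
  haveI : Fact p.Prime := ⟨hp⟩
  intro h
  have h2 := congrArg (fun z : ℤ => (z : ZMod p)) h
  push_cast at h2
  simp only [ZMod.natCast_self, zero_mul] at h2
  have h3 : ((b : ZMod p) - a) * ((c : ZMod p) - a) * ((d : ZMod p) - a) *
      ((c : ZMod p) - b) * ((d : ZMod p) - b) * ((d : ZMod p) - c) = 0 := by
    linear_combination h2
  have hne : ∀ {x y : ℕ}, x < p → y < p → x ≠ y → (x : ZMod p) - (y : ZMod p) ≠ 0 :=
    fun hx hy hxy => sub_ne_zero.mpr fun e => hxy (natCast_inj_of_lt' hx hy e)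
  rcases mul_eq_zero.mp h3 with h4 | h4
  · rcases mul_eq_zero.mp h4 with h5 | h5
    · rcases mul_eq_zero.mp h5 with h6 | h6
      · rcases mul_eq_zero.mp h6 with h7 | h7
        · rcases mul_eq_zero.mp h7 with h8 | h8
          · exact hne hb ha (Ne.symm hab) h8
          · exact hne hc ha (Ne.symm hac) h8
        · exact hne hd ha (Ne.symm had) h7
      · exact hne hc hb (Ne.symm hbc) h6
    · exact hne hd hb (Ne.symm hbd) h5
  · exact hne hd hc (Ne.symm hcd) h4

private lemma NC4R {p A B C D YA YB YC YD ZA ZB ZC ZD rA rB rC rD : ℕ}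
    (hIZ : ((B : ℤ) - A) * (((YC : ℤ) - YA) *
          (((p * rD + ZD : ℕ) : ℤ) - ((p * rA + ZA : ℕ) : ℤ)) -
        (((p * rC + ZC : ℕ) : ℤ) - ((p * rA + ZA : ℕ) : ℤ)) * ((YD : ℤ) - YA))
      - ((YB : ℤ) - YA) * (((C : ℤ) - A) *
          (((p * rD + ZD : ℕ) : ℤ) - ((p * rA + ZA : ℕ) : ℤ)) -
        (((p * rC + ZC : ℕ) : ℤ) - ((p * rA + ZA : ℕ) : ℤ)) * ((D : ℤ) - A))
      + (((p * rB + ZB : ℕ) : ℤ) - ((p * rA + ZA : ℕ) : ℤ)) * (((C : ℤ) - A) *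
          (((YD : ℤ) - YA)) - ((YC : ℤ) - YA) * ((D : ℤ) - A)) ≠ 0) :
    ((B : ℝ) - A) * (((YC : ℝ) - YA) *
          (((p : ℝ) * rD + (ZD : ℝ)) - ((p : ℝ) * rA + (ZA : ℝ))) -
        (((p : ℝ) * rC + (ZC : ℝ)) - ((p : ℝ) * rA + (ZA : ℝ))) * ((YD : ℝ) - YA))
      - ((YB : ℝ) - YA) * (((C : ℝ) - A) *
          (((p : ℝ) * rD + (ZD : ℝ)) - ((p : ℝ) * rA + (ZA : ℝ))) -
        (((p : ℝ) * rC + (ZC : ℝ)) - ((p : ℝ) * rA + (ZA : ℝ))) * ((D : ℝ) - A))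
      + (((p : ℝ) * rB + (ZB : ℝ)) - ((p : ℝ) * rA + (ZA : ℝ))) * (((C : ℝ) - A) *
          (((YD : ℝ) - YA)) - ((YC : ℝ) - YA) * ((D : ℝ) - A)) ≠ 0 := by
  intro h
  apply hIZ
  exact_mod_cast h

private lemma SHARE' {A B C YA YB YC : ℝ}
    (hD : (B - A) * (YC - YA) - (YB - YA) * (C - A) ≠ 0) {e f : ℝ}
    (h0 : e * (B - A) = f * (C - A)) (h1 : e * (YB - YA) = f * (YC - YA)) :
    e = 0 ∧ f = 0 := by
  have he : e * ((B - A) * (YC - YA) - (YB - YA) * (C - A)) = 0 := by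
    linear_combination (YC - YA) * h0 - (C - A) * h1
  have hf : f * ((B - A) * (YC - YA) - (YB - YA) * (C - A)) = 0 := by
    linear_combination (YB - YA) * h0 - (B - A) * h1
  exact ⟨(mul_eq_zero.mp he).resolve_right hD, (mul_eq_zero.mp hf).resolve_right hD⟩

private lemma COPL' {A B C D YA YB YC YD ZA ZB ZC ZD : ℝ}
    (hD : (B - A) * ((YC - YA) * (ZD - ZA) - (ZC - ZA) * (YD - YA))
      - (YB - YA) * ((C - A) * (ZD - ZA) - (ZC - ZA) * (D - A))
      + (ZB - ZA) * ((C - A) * (YD - YA) - (YC - YA) * (D - A)) ≠ 0) {s u : ℝ}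
    (h0 : (1 - s) * A + s * B = (1 - u) * C + u * D)
    (h1 : (1 - s) * YA + s * YB = (1 - u) * YC + u * YD)
    (h2 : (1 - s) * ZA + s * ZB = (1 - u) * ZC + u * ZD) : False := by
  apply hD
  have d0 : s * (B - A) + (-(1 - u)) * (C - A) + (-u) * (D - A) = 0 := by linear_combination h0
  have d1 : s * (YB - YA) + (-(1 - u)) * (YC - YA) + (-u) * (YD - YA) = 0 := by
    linear_combination h1
  have d2 : s * (ZB - ZA) + (-(1 - u)) * (ZC - ZA) + (-u) * (ZD - ZA) = 0 := by
    linear_combination h2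
  have hβ : (-(1 - u)) * ((B - A) * ((YC - YA) * (ZD - ZA) - (ZC - ZA) * (YD - YA))
      - (YB - YA) * ((C - A) * (ZD - ZA) - (ZC - ZA) * (D - A))
      + (ZB - ZA) * ((C - A) * (YD - YA) - (YC - YA) * (D - A))) = 0 := by
    linear_combination ((ZB - ZA) * (YD - YA) - (YB - YA) * (ZD - ZA)) * d0 +
      ((B - A) * (ZD - ZA) - (ZB - ZA) * (D - A)) * d1 +
      ((YB - YA) * (D - A) - (B - A) * (YD - YA)) * d2
  have hγ : (-u) * ((B - A) * ((YC - YA) * (ZD - ZA) - (ZC - ZA) * (YD - YA))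
      - (YB - YA) * ((C - A) * (ZD - ZA) - (ZC - ZA) * (D - A))
      + (ZB - ZA) * ((C - A) * (YD - YA) - (YC - YA) * (D - A))) = 0 := by
    linear_combination ((YB - YA) * (ZC - ZA) - (ZB - ZA) * (YC - YA)) * d0 +
      ((ZB - ZA) * (C - A) - (B - A) * (ZC - ZA)) * d1 +
      ((B - A) * (YC - YA) - (YB - YA) * (C - A)) * d2
  linear_combination (-1 : ℝ) * hβ - hγ

end AuxAlgebra

section AuxComb
open Finset
namespace TrackAux

variable {V : Type} [Fintype V] {G : SimpleGraph V} {t : ℕ}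

/-- number of vertices in track `i` -/
def ntr (L : TrackLayout V G t) (i : Fin t) : ℕ :=
  (Finset.univ.filter (fun u => L.track u = i)).card

/-- rank of `v` within its track -/
def rk (L : TrackLayout V G t) (v : V) : ℕ :=
  (Finset.univ.filter (fun u => L.track u = L.track v ∧ L.pos u < L.pos v)).card

/-- number of chunks of track `i` when cut into chunks of size `m` -/
def nch (L : TrackLayout V G t) (m : ℕ) (i : Fin t) : ℕ := (ntr L i + (m - 1)) / m

def base (L : TrackLayout V G t) (m : ℕ) (v : V) : ℕ :=
  ∑ i ∈ Finset.univ.filter (fun i => i < L.track v), nch L m i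

/-- supertrack of `v` -/
def sig (L : TrackLayout V G t) (m : ℕ) (v : V) : ℕ := base L m v + rk L v / m

/-- position of `v` within its supertrack -/
def rho (L : TrackLayout V G t) (m : ℕ) (v : V) : ℕ := rk L v % m

variable {L : TrackLayout V G t} {m : ℕ}

lemma rho_lt (hm : 0 < m) (v : V) : rho L m v < m := Nat.mod_lt _ hm

lemma rk_lt_ntr (v : V) : rk L v < ntr L (L.track v) := by
  apply Finset.card_lt_card
  have hsub : (Finset.univ.filter (fun u => L.track u = L.track v ∧ L.pos u < L.pos v))
      ⊆ Finset.univ.filter (fun u => L.track u = L.track v) := by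
    intro u hu
    simp only [Finset.mem_filter, Finset.mem_univ, true_and] at hu ⊢
    exact hu.1
  rw [Finset.ssubset_iff_of_subset hsub]
  exact ⟨v, by simp, by simp⟩

lemma rk_lt_rk (htr : L.track u = L.track v) (hpos : L.pos u < L.pos v) :
    rk L u < rk L v := by
  apply Finset.card_lt_card
  rw [Finset.ssubset_iff_of_subset ?sub]
  · exact ⟨u, by simp [htr, hpos], by simp⟩
  case sub =>
    intro w hw
    simp only [Finset.mem_filter, Finset.mem_univ, true_and] at hw ⊢
    exact ⟨hw.1.trans htr, hw.2.trans hpos⟩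

lemma pos_lt_iff_rk_lt (htr : L.track u = L.track v) :
    L.pos u < L.pos v ↔ rk L u < rk L v := by
  constructor
  · exact rk_lt_rk htr
  · intro h
    rcases lt_trichotomy (L.pos u) (L.pos v) with h' | h' | h'
    · exact h'
    · have huv := L.inj u v htr h'
      subst huv; omega
    · exact absurd (rk_lt_rk htr.symm h') (by omega)

lemma ntr_pos (v : V) : 0 < ntr L (L.track v) :=
  Finset.card_pos.mpr ⟨v, by simp⟩

lemma chunk_lt_nch (hm : 0 < m) (v : V) : rk L v / m < nch L m (L.track v) := by
  have h1 : rk L v ≤ ntr L (L.track v) - 1 := Nat.le_sub_one_of_lt (rk_lt_ntr v)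
  have h2 : ntr L (L.track v) + (m - 1) = (ntr L (L.track v) - 1) + m := by
    have := ntr_pos (L := L) v; omega
  calc rk L v / m ≤ (ntr L (L.track v) - 1) / m := Nat.div_le_div_right h1
    _ < nch L m (L.track v) := by
        rw [nch, h2, Nat.add_div_right _ hm]; omega

lemma base_eq_of_track (h : L.track u = L.track v) : base L m u = base L m v := by
  unfold base; rw [h]

lemma sig_lt_sig (hm : 0 < m) (h : L.track u < L.track v) : sig L m u < sig L m v := by
  have h1 : base L m u + nch L m (L.track u) ≤ base L m v := by
    have hsub : insert (L.track u) (Finset.univ.filter (fun i => i < L.track u))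
        ⊆ Finset.univ.filter (fun i => i < L.track v) := by
      intro i hi
      simp only [Finset.mem_insert, Finset.mem_filter, Finset.mem_univ, true_and] at hi ⊢
      rcases hi with rfl | hi
      · exact h
      · exact hi.trans h
    calc base L m u + nch L m (L.track u)
        = ∑ i ∈ insert (L.track u) (Finset.univ.filter (fun i => i < L.track u)), nch L m i := by
          rw [Finset.sum_insert (by simp), base, add_comm]
      _ ≤ base L m v := Finset.sum_le_sum_of_subset hsub
  have h2 := chunk_lt_nch (L := L) hm u
  calc sig L m u < base L m u + nch L m (L.track u) := Nat.add_lt_add_left h2 _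
    _ ≤ base L m v := h1
    _ ≤ sig L m v := Nat.le_add_right _ _

lemma track_eq_of_sig_eq (hm : 0 < m) (h : sig L m u = sig L m v) :
    L.track u = L.track v := by
  rcases lt_trichotomy (L.track u) (L.track v) with h' | h' | h'
  · exact absurd (sig_lt_sig hm h') (by omega)
  · exact h'
  · exact absurd (sig_lt_sig hm h') (by omega)

lemma chunk_eq_of_sig_eq (hm : 0 < m) (h : sig L m u = sig L m v) :
    rk L u / m = rk L v / m := by
  have ht := track_eq_of_sig_eq hm h
  have hb := base_eq_of_track (L := L) (m := m) ht
  unfold sig at h; omega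

lemma pos_lt_iff_rho_lt (hm : 0 < m) (h : sig L m u = sig L m v) :
    L.pos u < L.pos v ↔ rho L m u < rho L m v := by
  have ht := track_eq_of_sig_eq hm h
  have hc := chunk_eq_of_sig_eq hm h
  rw [pos_lt_iff_rk_lt ht]
  have e1 : rk L u = m * (rk L u / m) + rho L m u := (Nat.div_add_mod _ _).symm
  have e2 : rk L v = m * (rk L v / m) + rho L m v := (Nat.div_add_mod _ _).symm
  rw [e1, e2, hc]
  exact add_lt_add_iff_left _

lemma eq_of_sig_rho_eq (hm : 0 < m) (hs : sig L m u = sig L m v)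
    (hr : rho L m u = rho L m v) : u = v := by
  have h1 : ¬ L.pos u < L.pos v := fun h => by
    have := (pos_lt_iff_rho_lt hm hs).mp h; omega
  have h2 : ¬ L.pos v < L.pos u := fun h => by
    have := (pos_lt_iff_rho_lt hm hs.symm).mp h; omega
  exact L.inj u v (track_eq_of_sig_eq hm hs) (by omega)

lemma sig_ne_of_adj (hm : 0 < m) (h : G.Adj u v) : sig L m u ≠ sig L m v :=
  fun he => L.proper u v h (track_eq_of_sig_eq hm he)

lemma sum_ntr : ∑ i, ntr L i = Fintype.card V := by
  rw [← Finset.card_univ,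
    Finset.card_eq_sum_card_fiberwise (f := L.track) (t := Finset.univ) (fun x _ => mem_univ _)]
  rfl

lemma sig_lt (hm : 0 < m) (hnm : Fintype.card V ≤ t * m) (v : V) :
    sig L m v < 2 * t := by
  have h1 : sig L m v < base L m v + nch L m (L.track v) := by
    have := chunk_lt_nch (L := L) hm v; unfold sig; omega
  have h2 : base L m v + nch L m (L.track v) ≤ ∑ i, nch L m i := by
    calc base L m v + nch L m (L.track v)
        = ∑ i ∈ insert (L.track v) (Finset.univ.filter (fun i => i < L.track v)), nch L m i := by
          rw [Finset.sum_insert (by simp), base, add_comm]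
      _ ≤ ∑ i, nch L m i := Finset.sum_le_sum_of_subset (Finset.subset_univ _)
  have h3 : ∑ i, nch L m i ≤ 2 * t := by
    have h4 : (∑ i, nch L m i) * m ≤ ∑ i : Fin t, (ntr L i + (m - 1)) := by
      rw [Finset.sum_mul]
      exact Finset.sum_le_sum fun i _ => Nat.div_mul_le_self _ _
    have h5 : ∑ i : Fin t, (ntr L i + (m - 1)) = Fintype.card V + t * (m - 1) := by
      rw [Finset.sum_add_distrib, sum_ntr, Finset.sum_const, Finset.card_univ,
        Fintype.card_fin, smul_eq_mul]
    rw [h5] at h4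
    have h6 : Fintype.card V + t * (m - 1) ≤ 2 * t * m := by
      have ha : t * (m - 1) ≤ t * m := Nat.mul_le_mul_left _ (Nat.sub_le _ _)
      calc Fintype.card V + t * (m - 1) ≤ t * m + t * m := Nat.add_le_add hnm ha
        _ = 2 * t * m := by ring
    by_contra hcon
    push_neg at hcon
    have h8 : (2 * t + 1) * m ≤ (∑ i, nch L m i) * m := Nat.mul_le_mul_right _ (by omega)
    have h9 : 2 * t * m + m ≤ 2 * t * m := by
      calc 2 * t * m + m = (2 * t + 1) * m := by ring
        _ ≤ (∑ i, nch L m i) * m := h8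
        _ ≤ Fintype.card V + t * (m - 1) := h4
        _ ≤ 2 * t * m := h6
    omega
  omega

end TrackAux
end AuxComb

section AuxGeo

private def vpt (p σ ρ : ℕ) : Fin 3 → ℤ :=
  ![(σ : ℤ), ((σ ^ 2 % p : ℕ) : ℤ), ((p * ρ + σ ^ 3 % p : ℕ) : ℤ)]

private lemma vpt0 (p σ ρ : ℕ) : vpt p σ ρ 0 = (σ : ℤ) := rfl
private lemma vpt1 (p σ ρ : ℕ) : vpt p σ ρ 1 = ((σ ^ 2 % p : ℕ) : ℤ) := rfl
private lemma vpt2 (p σ ρ : ℕ) : vpt p σ ρ 2 = ((p * ρ + σ ^ 3 % p : ℕ) : ℤ) := rfl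

private lemma gvpt0 (p σ ρ : ℕ) : gridPt (vpt p σ ρ) 0 = (σ : ℝ) := by
  show ((vpt p σ ρ 0 : ℤ) : ℝ) = _
  rw [vpt0]
  norm_cast
private lemma gvpt1 (p σ ρ : ℕ) : gridPt (vpt p σ ρ) 1 = ((σ ^ 2 % p : ℕ) : ℝ) := by
  show ((vpt p σ ρ 1 : ℤ) : ℝ) = _
  rw [vpt1]
  norm_cast
private lemma gvpt2 (p σ ρ : ℕ) :
    gridPt (vpt p σ ρ) 2 = (p : ℝ) * ρ + ((σ ^ 3 % p : ℕ) : ℝ) := by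
  show ((vpt p σ ρ 2 : ℤ) : ℝ) = _
  rw [vpt2, Int.cast_natCast]
  push_cast
  ring

private lemma seg_param {x y q : Fin 3 → ℝ} (h : q ∈ segment ℝ x y) :
    ∃ s : ℝ, 0 ≤ s ∧ s ≤ 1 ∧ ∀ i, q i = (1 - s) * x i + s * y i := by
  obtain ⟨a, b, ha, hb, hab, hq⟩ := h
  refine ⟨b, hb, by linarith, fun i => ?_⟩
  have h2 := congrFun hq i
  simp only [Pi.add_apply, Pi.smul_apply, smul_eq_mul] at h2
  linear_combination -h2 + x i * hab

private lemma gridPt_inj (P Q : Fin 3 → ℤ) (h : gridPt P = gridPt Q) : P = Q :=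
  funext fun i => by
    have h2 : ((P i : ℤ) : ℝ) = ((Q i : ℤ) : ℝ) := congrFun h i
    exact_mod_cast h2

end AuxGeo

set_option maxHeartbeats 2000000

/-- Every `n`-vertex graph `G` that has a `t`-track layout has a
`2t × 4t × (4t⬝⌈n/t⌉)` three-dimensional drawing; in particular (taking
`t = tn(G)`), every graph has a drawing of dimensions
`O(tn(G)) × O(tn(G)) × O(n)`. -/
theorem track_layout_to_small_drawing {V : Type} [Fintype V] (G : SimpleGraph V)
    (t : ℕ) (L : TrackLayout V G t) :
    ∃ D : Drawing3D V G,
      D.InBox (2 * t) (4 * t) (4 * t * ⌈(Fintype.card V : ℝ) / (t : ℝ)⌉₊) := by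
  classical
  rcases isEmpty_or_nonempty V with hV | hV
  · refine ⟨⟨fun v => isEmptyElim v, ?_, ?_, ?_⟩, ⟨fun _ => 0, fun v => isEmptyElim v⟩⟩
    · intro a b h; exact isEmptyElim a
    · intro v w x h; exact isEmptyElim v
    · intro v w x y h; exact isEmptyElim v
  obtain ⟨v0⟩ := hV
  have ht : 0 < t := Nat.pos_of_ne_zero (fun h => by subst h; exact (L.track v0).elim0)
  set n := Fintype.card V with hn
  set m := ⌈(n : ℝ) / (t : ℝ)⌉₊ with hmdef
  have hn1 : 0 < n := Fintype.card_pos_iff.mpr ⟨v0⟩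
  have hm1 : 0 < m :=
    Nat.ceil_pos.mpr (div_pos (by exact_mod_cast hn1) (by exact_mod_cast ht))
  have hnm : n ≤ t * m := by
    have h1 : (n : ℝ) / t ≤ m := Nat.le_ceil _
    have htR : (0 : ℝ) < t := by exact_mod_cast ht
    rw [div_le_iff₀ htR] at h1
    have h2 : (n : ℝ) ≤ t * m := by linarith
    exact_mod_cast h2
  clear_value n m
  have hnm' : Fintype.card V ≤ t * m := hn ▸ hnm
  obtain ⟨p, hp, hp1, hp2⟩ := Nat.exists_prime_lt_and_le_two_mul (2 * t) (by omega)
  have hp0 : 0 < p := hp.pos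
  have hpR : (p : ℝ) ≠ 0 := Nat.cast_ne_zero.mpr (by omega)
  have hppos : (0 : ℝ) < p := by exact_mod_cast hp0
  have hσ2t : ∀ a : V, TrackAux.sig L m a < 2 * t := TrackAux.sig_lt hm1 hnm'
  have hσp : ∀ a : V, TrackAux.sig L m a < p := fun a => lt_trans (hσ2t a) hp1
  -- injectivity of the point map
  have hPtinj : ∀ a b : V,
      vpt p (TrackAux.sig L m a) (TrackAux.rho L m a)
        = vpt p (TrackAux.sig L m b) (TrackAux.rho L m b) → a = b := by
    intro a b h
    have h0 := congrFun h 0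
    rw [vpt0, vpt0] at h0
    have hs : TrackAux.sig L m a = TrackAux.sig L m b := by exact_mod_cast h0
    have h2 := congrFun h 2
    rw [vpt2, vpt2, hs] at h2
    have h2' : p * TrackAux.rho L m a + TrackAux.sig L m b ^ 3 % p
        = p * TrackAux.rho L m b + TrackAux.sig L m b ^ 3 % p := by exact_mod_cast h2
    have h3 : p * TrackAux.rho L m a = p * TrackAux.rho L m b := Nat.add_right_cancel h2'
    exact TrackAux.eq_of_sig_rho_eq hm1 hs (Nat.eq_of_mul_eq_mul_left hp0 h3)
  refine ⟨⟨fun v => vpt p (TrackAux.sig L m v) (TrackAux.rho L m v), ?_, ?_, ?_⟩, ?_⟩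
  -- injectivity
  · intro a b h
    exact hPtinj a b h
  -- vertexDisjoint
  · intro v w x hvw hseg
    obtain ⟨s, hs0, hs1, hs⟩ := seg_param hseg
    have e0 := hs 0; have e1 := hs 1; have e2 := hs 2
    simp only [gvpt0] at e0
    simp only [gvpt1] at e1
    simp only [gvpt2] at e2
    have hvwne : TrackAux.sig L m v ≠ TrackAux.sig L m w := TrackAux.sig_ne_of_adj hm1 hvw
    have hvwR : ((TrackAux.sig L m w : ℝ)) - (TrackAux.sig L m v : ℝ) ≠ 0 := by
      refine sub_ne_zero.mpr ?_
      exact_mod_cast hvwne.symm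
    by_cases hxv : TrackAux.sig L m x = TrackAux.sig L m v
    · left
      have hs' : s = 0 := by
        rw [hxv] at e0
        have h : s * ((TrackAux.sig L m w : ℝ) - (TrackAux.sig L m v : ℝ)) = 0 := by
          linear_combination -e0
        exact (mul_eq_zero.mp h).resolve_right hvwR
      have hρ : TrackAux.rho L m x = TrackAux.rho L m v := by
        rw [hs', hxv] at e2
        have h : (p : ℝ) * TrackAux.rho L m x = (p : ℝ) * TrackAux.rho L m v := by
          linear_combination e2
        exact_mod_cast mul_left_cancel₀ hpR h
      exact TrackAux.eq_of_sig_rho_eq hm1 hxv hρ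
    · by_cases hxw : TrackAux.sig L m x = TrackAux.sig L m w
      · right
        have hs' : s = 1 := by
          rw [hxw] at e0
          have h : (1 - s) * ((TrackAux.sig L m w : ℝ) - (TrackAux.sig L m v : ℝ)) = 0 := by
            linear_combination e0
          have := (mul_eq_zero.mp h).resolve_right hvwR
          linarith
        have hρ : TrackAux.rho L m x = TrackAux.rho L m w := by
          rw [hs', hxw] at e2
          have h : (p : ℝ) * TrackAux.rho L m x = (p : ℝ) * TrackAux.rho L m w := by
            linear_combination e2
          exact_mod_cast mul_left_cancel₀ hpR h
        exact TrackAux.eq_of_sig_rho_eq hm1 hxw hρ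
      · exfalso
        have hab : TrackAux.sig L m v ≠ TrackAux.sig L m w := hvwne
        have hac : TrackAux.sig L m v ≠ TrackAux.sig L m x := fun h => hxv h.symm
        have hbc : TrackAux.sig L m w ≠ TrackAux.sig L m x := fun h => hxw h.symm
        have h0' : s * ((TrackAux.sig L m w : ℝ) - (TrackAux.sig L m v : ℝ))
            = 1 * ((TrackAux.sig L m x : ℝ) - (TrackAux.sig L m v : ℝ)) := by
          linear_combination -e0
        have h1' : s * (((TrackAux.sig L m w ^ 2 % p : ℕ) : ℝ) - ((TrackAux.sig L m v ^ 2 % p : ℕ) : ℝ))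
            = 1 * (((TrackAux.sig L m x ^ 2 % p : ℕ) : ℝ) - ((TrackAux.sig L m v ^ 2 % p : ℕ) : ℝ)) := by
          linear_combination -e1
        obtain ⟨-, hf⟩ :=
          SHARE' (NC3R (NC3 hp (hσp v) (hσp w) (hσp x) hab hac hbc)) h0' h1'
        exact one_ne_zero hf
  -- edgesDisjoint
  · intro v w x y hvw hxy hne q hq1 hq2
    obtain ⟨s, hs0, hs1, hs⟩ := seg_param hq1
    obtain ⟨u, hu0, hu1, hu⟩ := seg_param hq2
    have e0 := (hs 0).symm.trans (hu 0)
    have e1 := (hs 1).symm.trans (hu 1)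
    have e2 := (hs 2).symm.trans (hu 2)
    simp only [gvpt0] at e0
    simp only [gvpt1] at e1
    simp only [gvpt2] at e2
    have hσvw : TrackAux.sig L m v ≠ TrackAux.sig L m w := TrackAux.sig_ne_of_adj hm1 hvw
    have hσxy : TrackAux.sig L m x ≠ TrackAux.sig L m y := TrackAux.sig_ne_of_adj hm1 hxy
    have hqv : s = 0 → q = gridPt (vpt p (TrackAux.sig L m v) (TrackAux.rho L m v)) :=
      fun h => funext fun i => by rw [hs i, h]; ring
    have hqw : s = 1 → q = gridPt (vpt p (TrackAux.sig L m w) (TrackAux.rho L m w)) :=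
      fun h => funext fun i => by rw [hs i, h]; ring
    have hqx : u = 0 → q = gridPt (vpt p (TrackAux.sig L m x) (TrackAux.rho L m x)) :=
      fun h => funext fun i => by rw [hu i, h]; ring
    have hqy : u = 1 → q = gridPt (vpt p (TrackAux.sig L m y) (TrackAux.rho L m y)) :=
      fun h => funext fun i => by rw [hu i, h]; ring
    by_cases hvx : TrackAux.sig L m v = TrackAux.sig L m x
    · by_cases hwy : TrackAux.sig L m w = TrackAux.sig L m y
      · -- Case 3a : same track pair, same orientation
        rw [← hvx, ← hwy] at e0 e2
        have hsu : s = u := by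
          have h : (s - u) * ((TrackAux.sig L m w : ℝ) - (TrackAux.sig L m v : ℝ)) = 0 := by
            linear_combination e0
          have := (mul_eq_zero.mp h).resolve_right
            (sub_ne_zero.mpr (by exact_mod_cast hσvw.symm))
          linarith
        rw [← hsu] at e2
        have key : (1 - s) * ((p : ℝ) * TrackAux.rho L m v - (p : ℝ) * TrackAux.rho L m x)
            = s * ((p : ℝ) * TrackAux.rho L m y - (p : ℝ) * TrackAux.rho L m w) := by
          linear_combination e2
        rcases eq_or_ne v x with hvx' | hvx'
        · rcases eq_or_ne w y with hwy' | hwy'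
          · exact absurd (Or.inl ⟨hvx'.symm, hwy'.symm⟩) hne
          · -- v = x, w ≠ y : s = 0
            have hρwy : (p : ℝ) * TrackAux.rho L m y - (p : ℝ) * TrackAux.rho L m w ≠ 0 := by
              intro h
              apply hwy'
              apply TrackAux.eq_of_sig_rho_eq hm1 hwy
              have h2 : (p : ℝ) * TrackAux.rho L m w = (p : ℝ) * TrackAux.rho L m y := by
                linarith
              exact_mod_cast mul_left_cancel₀ hpR h2
            have hkey0 : (1 - s) * ((p : ℝ) * TrackAux.rho L m v
                - (p : ℝ) * TrackAux.rho L m x) = 0 := by rw [hvx']; ring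
            have h6 : s * ((p : ℝ) * TrackAux.rho L m y - (p : ℝ) * TrackAux.rho L m w) = 0 :=
              key.symm.trans hkey0
            have hs' : s = 0 := (mul_eq_zero.mp h6).resolve_right hρwy
            exact Or.inl ⟨hqv hs', Or.inl hvx'⟩
        · rcases eq_or_ne w y with hwy' | hwy'
          · -- v ≠ x, w = y : s = 1
            have hρvx : (p : ℝ) * TrackAux.rho L m v - (p : ℝ) * TrackAux.rho L m x ≠ 0 := by
              intro h
              apply hvx'
              apply TrackAux.eq_of_sig_rho_eq hm1 hvx
              have h2 : (p : ℝ) * TrackAux.rho L m v = (p : ℝ) * TrackAux.rho L m x := by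
                linarith
              exact_mod_cast mul_left_cancel₀ hpR h2
            have hkey0 : s * ((p : ℝ) * TrackAux.rho L m y
                - (p : ℝ) * TrackAux.rho L m w) = 0 := by rw [← hwy']; ring
            have h6 : (1 - s) * ((p : ℝ) * TrackAux.rho L m v
                - (p : ℝ) * TrackAux.rho L m x) = 0 := key.trans hkey0
            have hs' : s = 1 := by
              have := (mul_eq_zero.mp h6).resolve_right hρvx
              linarith
            exact Or.inr ⟨hqw hs', Or.inr hwy'⟩
          · -- both distinct : impossible by noX
            exfalso
            have htvx : L.track v = L.track x := TrackAux.track_eq_of_sig_eq hm1 hvx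
            have htwy : L.track w = L.track y := TrackAux.track_eq_of_sig_eq hm1 hwy
            have htvw : L.track v ≠ L.track w := L.proper v w hvw
            rcases lt_trichotomy (L.pos v) (L.pos x) with hlt | heq | hgt
            · have h1 : TrackAux.rho L m v < TrackAux.rho L m x :=
                (TrackAux.pos_lt_iff_rho_lt hm1 hvx).mp hlt
              have h2 : L.pos w < L.pos y := by
                have hne' : L.pos w ≠ L.pos y := fun h => hwy' (L.inj w y htwy h)
                rcases lt_trichotomy (L.pos w) (L.pos y) with h | h | h
                · exact h
                · exact absurd h hne'
                · exact (L.noX v w x y hvw hxy htvx htwy htvw hlt h).elim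
              have h3 : TrackAux.rho L m w < TrackAux.rho L m y :=
                (TrackAux.pos_lt_iff_rho_lt hm1 hwy).mp h2
              have hL : (p : ℝ) * TrackAux.rho L m v - (p : ℝ) * TrackAux.rho L m x < 0 := by
                have hc : (TrackAux.rho L m v : ℝ) < TrackAux.rho L m x := by exact_mod_cast h1
                have h9 := mul_lt_mul_of_pos_left hc hppos
                linarith
              have hR : 0 < (p : ℝ) * TrackAux.rho L m y - (p : ℝ) * TrackAux.rho L m w := by
                have hc : (TrackAux.rho L m w : ℝ) < TrackAux.rho L m y := by exact_mod_cast h3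
                have h9 := mul_lt_mul_of_pos_left hc hppos
                linarith
              have h4 : (1 - s) * ((p : ℝ) * TrackAux.rho L m v
                  - (p : ℝ) * TrackAux.rho L m x) ≤ 0 :=
                mul_nonpos_of_nonneg_of_nonpos (by linarith) hL.le
              have h5 : 0 ≤ s * ((p : ℝ) * TrackAux.rho L m y
                  - (p : ℝ) * TrackAux.rho L m w) := mul_nonneg hs0 hR.le
              have h6 : s * ((p : ℝ) * TrackAux.rho L m y
                  - (p : ℝ) * TrackAux.rho L m w) = 0 := le_antisymm (by linarith) h5
              have hs' : s = 0 := (mul_eq_zero.mp h6).resolve_right (ne_of_gt hR)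
              rw [hs'] at key
              linarith [key]
            · exact hvx' (L.inj v x htvx heq)
            · have h1 : TrackAux.rho L m x < TrackAux.rho L m v :=
                (TrackAux.pos_lt_iff_rho_lt hm1 hvx.symm).mp hgt
              have h2 : L.pos y < L.pos w := by
                have hne' : L.pos y ≠ L.pos w := fun h => hwy' (L.inj w y htwy h.symm)
                rcases lt_trichotomy (L.pos y) (L.pos w) with h | h | h
                · exact h
                · exact absurd h hne'
                · exact (L.noX x y v w hxy hvw htvx.symm htwy.symm
                    (fun hh => htvw (htvx.symm ▸ htwy.symm ▸ hh)) hgt h).elim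
              have h3 : TrackAux.rho L m y < TrackAux.rho L m w :=
                (TrackAux.pos_lt_iff_rho_lt hm1 hwy.symm).mp h2
              have hL : 0 < (p : ℝ) * TrackAux.rho L m v - (p : ℝ) * TrackAux.rho L m x := by
                have hc : (TrackAux.rho L m x : ℝ) < TrackAux.rho L m v := by exact_mod_cast h1
                have h9 := mul_lt_mul_of_pos_left hc hppos
                linarith
              have hR : (p : ℝ) * TrackAux.rho L m y - (p : ℝ) * TrackAux.rho L m w < 0 := by
                have hc : (TrackAux.rho L m y : ℝ) < TrackAux.rho L m w := by exact_mod_cast h3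
                have h9 := mul_lt_mul_of_pos_left hc hppos
                linarith
              have h4 : (1 - s) * ((p : ℝ) * TrackAux.rho L m v
                  - (p : ℝ) * TrackAux.rho L m x) = 0 := by
                have h5 : s * ((p : ℝ) * TrackAux.rho L m y
                    - (p : ℝ) * TrackAux.rho L m w) ≤ 0 :=
                  mul_nonpos_of_nonneg_of_nonpos hs0 hR.le
                have h6 : 0 ≤ (1 - s) * ((p : ℝ) * TrackAux.rho L m v
                    - (p : ℝ) * TrackAux.rho L m x) :=
                  mul_nonneg (by linarith) hL.le
                linarith
              have hs' : s = 1 := by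
                have := (mul_eq_zero.mp h4).resolve_right (ne_of_gt hL)
                linarith
              rw [hs'] at key
              linarith [key]
      · -- shared supertrack : v-x only
        have hvy : TrackAux.sig L m v ≠ TrackAux.sig L m y :=
          fun h => hσxy (hvx.symm.trans h)
        have hwx : TrackAux.sig L m w ≠ TrackAux.sig L m x :=
          fun h => hσvw (h.trans hvx.symm).symm
        rw [← hvx] at e0 e1
        have h0' : s * ((TrackAux.sig L m w : ℝ) - (TrackAux.sig L m v : ℝ))
            = u * ((TrackAux.sig L m y : ℝ) - (TrackAux.sig L m v : ℝ)) := by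
          linear_combination e0
        have h1' : s * (((TrackAux.sig L m w ^ 2 % p : ℕ) : ℝ)
              - ((TrackAux.sig L m v ^ 2 % p : ℕ) : ℝ))
            = u * (((TrackAux.sig L m y ^ 2 % p : ℕ) : ℝ)
              - ((TrackAux.sig L m v ^ 2 % p : ℕ) : ℝ)) := by
          linear_combination e1
        obtain ⟨hs', hu'⟩ :=
          SHARE' (NC3R (NC3 hp (hσp v) (hσp w) (hσp y) hσvw hvy hwy)) h0' h1'
        have hveq : v = x := hPtinj v x (gridPt_inj _ _ ((hqv hs').symm.trans (hqx hu')))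
        exact Or.inl ⟨hqv hs', Or.inl hveq⟩
    · by_cases hvy : TrackAux.sig L m v = TrackAux.sig L m y
      · by_cases hwx : TrackAux.sig L m w = TrackAux.sig L m x
        · -- Case 3b : same track pair, opposite orientation
          rw [← hvy, ← hwx] at e0 e2
          have hsu : u = 1 - s := by
            have h : (1 - s - u) * ((TrackAux.sig L m v : ℝ) - (TrackAux.sig L m w : ℝ)) = 0 := by
              linear_combination e0
            have := (mul_eq_zero.mp h).resolve_right
              (sub_ne_zero.mpr (by exact_mod_cast hσvw))
            linarith
          rw [hsu] at e2
          have key : (1 - s) * ((p : ℝ) * TrackAux.rho L m v - (p : ℝ) * TrackAux.rho L m y)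
              = s * ((p : ℝ) * TrackAux.rho L m x - (p : ℝ) * TrackAux.rho L m w) := by
            linear_combination e2
          rcases eq_or_ne v y with hvy' | hvy'
          · rcases eq_or_ne w x with hwx' | hwx'
            · exact absurd (Or.inr ⟨hwx'.symm, hvy'.symm⟩) hne
            · have hρ : (p : ℝ) * TrackAux.rho L m x - (p : ℝ) * TrackAux.rho L m w ≠ 0 := by
                intro h
                apply hwx'
                apply TrackAux.eq_of_sig_rho_eq hm1 hwx
                have h2 : (p : ℝ) * TrackAux.rho L m w = (p : ℝ) * TrackAux.rho L m x := by
                  linarith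
                exact_mod_cast mul_left_cancel₀ hpR h2
              have hkey0 : (1 - s) * ((p : ℝ) * TrackAux.rho L m v
                  - (p : ℝ) * TrackAux.rho L m y) = 0 := by rw [hvy']; ring
              have h6 : s * ((p : ℝ) * TrackAux.rho L m x - (p : ℝ) * TrackAux.rho L m w) = 0 :=
                key.symm.trans hkey0
              have hs' : s = 0 := (mul_eq_zero.mp h6).resolve_right hρ
              exact Or.inl ⟨hqv hs', Or.inr hvy'⟩
          · rcases eq_or_ne w x with hwx' | hwx'
            · have hρ : (p : ℝ) * TrackAux.rho L m v - (p : ℝ) * TrackAux.rho L m y ≠ 0 := by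
                intro h
                apply hvy'
                apply TrackAux.eq_of_sig_rho_eq hm1 hvy
                have h2 : (p : ℝ) * TrackAux.rho L m v = (p : ℝ) * TrackAux.rho L m y := by
                  linarith
                exact_mod_cast mul_left_cancel₀ hpR h2
              have hkey0 : s * ((p : ℝ) * TrackAux.rho L m x
                  - (p : ℝ) * TrackAux.rho L m w) = 0 := by rw [← hwx']; ring
              have h6 : (1 - s) * ((p : ℝ) * TrackAux.rho L m v
                  - (p : ℝ) * TrackAux.rho L m y) = 0 := key.trans hkey0
              have hs' : s = 1 := by
                have := (mul_eq_zero.mp h6).resolve_right hρ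
                linarith
              exact Or.inr ⟨hqw hs', Or.inl hwx'⟩
            · -- both distinct : impossible by noX
              exfalso
              have htvy : L.track v = L.track y := TrackAux.track_eq_of_sig_eq hm1 hvy
              have htwx : L.track w = L.track x := TrackAux.track_eq_of_sig_eq hm1 hwx
              have htvw : L.track v ≠ L.track w := L.proper v w hvw
              rcases lt_trichotomy (L.pos v) (L.pos y) with hlt | heq | hgt
              · have h1 : TrackAux.rho L m v < TrackAux.rho L m y :=
                  (TrackAux.pos_lt_iff_rho_lt hm1 hvy).mp hlt
                have h2 : L.pos w < L.pos x := by
                  have hne' : L.pos w ≠ L.pos x := fun h => hwx' (L.inj w x htwx h)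
                  rcases lt_trichotomy (L.pos w) (L.pos x) with h | h | h
                  · exact h
                  · exact absurd h hne'
                  · exact (L.noX v w y x hvw hxy.symm htvy htwx htvw hlt h).elim
                have h3 : TrackAux.rho L m w < TrackAux.rho L m x :=
                  (TrackAux.pos_lt_iff_rho_lt hm1 hwx).mp h2
                have hL : (p : ℝ) * TrackAux.rho L m v - (p : ℝ) * TrackAux.rho L m y < 0 := by
                  have hc : (TrackAux.rho L m v : ℝ) < TrackAux.rho L m y := by exact_mod_cast h1
                  have h9 := mul_lt_mul_of_pos_left hc hppos
                  linarith
                have hR : 0 < (p : ℝ) * TrackAux.rho L m x - (p : ℝ) * TrackAux.rho L m w := by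
                  have hc : (TrackAux.rho L m w : ℝ) < TrackAux.rho L m x := by exact_mod_cast h3
                  have h9 := mul_lt_mul_of_pos_left hc hppos
                  linarith
                have h5 : 0 ≤ s * ((p : ℝ) * TrackAux.rho L m x
                    - (p : ℝ) * TrackAux.rho L m w) := mul_nonneg hs0 hR.le
                have h4 : (1 - s) * ((p : ℝ) * TrackAux.rho L m v
                    - (p : ℝ) * TrackAux.rho L m y) ≤ 0 :=
                  mul_nonpos_of_nonneg_of_nonpos (by linarith) hL.le
                have h6 : s * ((p : ℝ) * TrackAux.rho L m x
                    - (p : ℝ) * TrackAux.rho L m w) = 0 := le_antisymm (by linarith) h5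
                have hs' : s = 0 := (mul_eq_zero.mp h6).resolve_right (ne_of_gt hR)
                rw [hs'] at key
                linarith [key]
              · exact hvy' (L.inj v y htvy heq)
              · have h1 : TrackAux.rho L m y < TrackAux.rho L m v :=
                  (TrackAux.pos_lt_iff_rho_lt hm1 hvy.symm).mp hgt
                have h2 : L.pos x < L.pos w := by
                  have hne' : L.pos x ≠ L.pos w := fun h => hwx' (L.inj w x htwx h.symm)
                  rcases lt_trichotomy (L.pos x) (L.pos w) with h | h | h
                  · exact h
                  · exact absurd h hne'
                  · exact (L.noX y x v w hxy.symm hvw htvy.symm htwx.symm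
                      (fun hh => htvw (htvy.symm ▸ htwx.symm ▸ hh)) hgt h).elim
                have h3 : TrackAux.rho L m x < TrackAux.rho L m w :=
                  (TrackAux.pos_lt_iff_rho_lt hm1 hwx.symm).mp h2
                have hL : 0 < (p : ℝ) * TrackAux.rho L m v - (p : ℝ) * TrackAux.rho L m y := by
                  have hc : (TrackAux.rho L m y : ℝ) < TrackAux.rho L m v := by exact_mod_cast h1
                  have h9 := mul_lt_mul_of_pos_left hc hppos
                  linarith
                have hR : (p : ℝ) * TrackAux.rho L m x - (p : ℝ) * TrackAux.rho L m w < 0 := by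
                  have hc : (TrackAux.rho L m x : ℝ) < TrackAux.rho L m w := by exact_mod_cast h3
                  have h9 := mul_lt_mul_of_pos_left hc hppos
                  linarith
                have h4 : (1 - s) * ((p : ℝ) * TrackAux.rho L m v
                    - (p : ℝ) * TrackAux.rho L m y) = 0 := by
                  have h5 : s * ((p : ℝ) * TrackAux.rho L m x
                      - (p : ℝ) * TrackAux.rho L m w) ≤ 0 :=
                    mul_nonpos_of_nonneg_of_nonpos hs0 hR.le
                  have h6 : 0 ≤ (1 - s) * ((p : ℝ) * TrackAux.rho L m v
                      - (p : ℝ) * TrackAux.rho L m y) := mul_nonneg (by linarith) hL.le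
                  linarith
                have hs' : s = 1 := by
                  have := (mul_eq_zero.mp h4).resolve_right (ne_of_gt hL)
                  linarith
                rw [hs'] at key
                linarith [key]
        · -- shared supertrack : v-y only
          have hwy : TrackAux.sig L m w ≠ TrackAux.sig L m y :=
            fun h => hσvw (h.trans hvy.symm).symm
          rw [← hvy] at e0 e1
          have h0' : s * ((TrackAux.sig L m w : ℝ) - (TrackAux.sig L m v : ℝ))
              = (1 - u) * ((TrackAux.sig L m x : ℝ) - (TrackAux.sig L m v : ℝ)) := by
            linear_combination e0
          have h1' : s * (((TrackAux.sig L m w ^ 2 % p : ℕ) : ℝ)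
                - ((TrackAux.sig L m v ^ 2 % p : ℕ) : ℝ))
              = (1 - u) * (((TrackAux.sig L m x ^ 2 % p : ℕ) : ℝ)
                - ((TrackAux.sig L m v ^ 2 % p : ℕ) : ℝ)) := by
            linear_combination e1
          obtain ⟨hs', hu'⟩ :=
            SHARE' (NC3R (NC3 hp (hσp v) (hσp w) (hσp x) hσvw hvx hwx)) h0' h1'
          have hu'' : u = 1 := by linarith
          have hveq : v = y := hPtinj v y (gridPt_inj _ _ ((hqv hs').symm.trans (hqy hu'')))
          exact Or.inl ⟨hqv hs', Or.inr hveq⟩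
      · by_cases hwx : TrackAux.sig L m w = TrackAux.sig L m x
        · -- shared supertrack : w-x only
          have hwy : TrackAux.sig L m w ≠ TrackAux.sig L m y :=
            fun h => hσxy (hwx.symm.trans h)
          rw [← hwx] at e0 e1
          have h0' : (1 - s) * ((TrackAux.sig L m v : ℝ) - (TrackAux.sig L m w : ℝ))
              = u * ((TrackAux.sig L m y : ℝ) - (TrackAux.sig L m w : ℝ)) := by
            linear_combination e0
          have h1' : (1 - s) * (((TrackAux.sig L m v ^ 2 % p : ℕ) : ℝ)
                - ((TrackAux.sig L m w ^ 2 % p : ℕ) : ℝ))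
              = u * (((TrackAux.sig L m y ^ 2 % p : ℕ) : ℝ)
                - ((TrackAux.sig L m w ^ 2 % p : ℕ) : ℝ)) := by
            linear_combination e1
          obtain ⟨hs', hu'⟩ :=
            SHARE' (NC3R (NC3 hp (hσp w) (hσp v) (hσp y) hσvw.symm hwy hvy)) h0' h1'
          have hs'' : s = 1 := by linarith
          have hweq : w = x := hPtinj w x (gridPt_inj _ _ ((hqw hs'').symm.trans (hqx hu')))
          exact Or.inr ⟨hqw hs'', Or.inl hweq⟩
        · by_cases hwy : TrackAux.sig L m w = TrackAux.sig L m y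
          · -- shared supertrack : w-y only
            rw [← hwy] at e0 e1
            have h0' : (1 - s) * ((TrackAux.sig L m v : ℝ) - (TrackAux.sig L m w : ℝ))
                = (1 - u) * ((TrackAux.sig L m x : ℝ) - (TrackAux.sig L m w : ℝ)) := by
              linear_combination e0
            have h1' : (1 - s) * (((TrackAux.sig L m v ^ 2 % p : ℕ) : ℝ)
                  - ((TrackAux.sig L m w ^ 2 % p : ℕ) : ℝ))
                = (1 - u) * (((TrackAux.sig L m x ^ 2 % p : ℕ) : ℝ)
                  - ((TrackAux.sig L m w ^ 2 % p : ℕ) : ℝ)) := by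
              linear_combination e1
            obtain ⟨hs', hu'⟩ :=
              SHARE' (NC3R (NC3 hp (hσp w) (hσp v) (hσp x) hσvw.symm hwx hvx)) h0' h1'
            have hs'' : s = 1 := by linarith
            have hu'' : u = 1 := by linarith
            have hweq : w = y := hPtinj w y (gridPt_inj _ _ ((hqw hs'').symm.trans (hqy hu'')))
            exact Or.inr ⟨hqw hs'', Or.inr hweq⟩
          · -- four distinct supertracks : impossible
            exfalso
            exact COPL' (NC4R (NC4 hp (hσp v) (hσp w) (hσp x) (hσp y)
              hσvw hvx hvy hwx hwy hσxy)) e0 e1 e2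
  -- the bounding box
  · refine ⟨fun _ => 0, fun v => ?_⟩
    have h0 : TrackAux.sig L m v < 2 * t := hσ2t v
    have h1 : TrackAux.sig L m v ^ 2 % p < p := Nat.mod_lt _ hp0
    have h2 : p * TrackAux.rho L m v + TrackAux.sig L m v ^ 3 % p < 4 * t * m := by
      have h3 : TrackAux.sig L m v ^ 3 % p < p := Nat.mod_lt _ hp0
      have h4 : TrackAux.rho L m v + 1 ≤ m := TrackAux.rho_lt hm1 v
      have h5 : p * TrackAux.rho L m v + p ≤ p * m := by
        calc p * TrackAux.rho L m v + p = p * (TrackAux.rho L m v + 1) := by ring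
          _ ≤ p * m := Nat.mul_le_mul_left _ h4
      have h6 : p * m ≤ 4 * t * m := Nat.mul_le_mul_right _ (by omega)
      omega
    refine ⟨?_, ?_, ?_, ?_, ?_, ?_⟩
    · show (0 : ℤ) ≤ ((TrackAux.sig L m v : ℕ) : ℤ)
      omega
    · show ((TrackAux.sig L m v : ℕ) : ℤ) < 0 + ((2 * t : ℕ) : ℤ)
      omega
    · show (0 : ℤ) ≤ ((TrackAux.sig L m v ^ 2 % p : ℕ) : ℤ)
      omega
    · show ((TrackAux.sig L m v ^ 2 % p : ℕ) : ℤ) < 0 + ((4 * t : ℕ) : ℤ)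
      omega
    · show (0 : ℤ) ≤ ((p * TrackAux.rho L m v + TrackAux.sig L m v ^ 3 % p : ℕ) : ℤ)
      omega
    · show ((p * TrackAux.rho L m v + TrackAux.sig L m v ^ 3 % p : ℕ) : ℤ)
          < 0 + ((4 * t * m : ℕ) : ℤ)
      omega
end

section
/- For every n-vertex graph G with track-number tn(G), and for every real r with 1 ≤ r ≤ n/tn(G), G has a three-dimensional drawing of dimensions at most (2n/r) × (4n/r) × 4n; thus G has a drawing with volume at most 32n³/r² and aspect ratio 2r. -/
open SimpleGraph

/-!
Cut every track of a minimum track layout into runs of `s` consecutive vertices, where `s` is the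
least run length for which at most `K = ⌊2n/r⌋` runs arise. The runs form a `K`-track layout in
which every track has at most `s` vertices. Fix a prime `K < q ≤ 2K` (Bertrand) and draw track
`i` as the vertical column above `(i, i² mod q)`, its `j`-th vertex at height `q j + (i³ mod q)`.
Modulo `q` these points lie on the moment curve, so Vandermonde determinants show that any three
columns project to non-collinear points and that points on four distinct columns are affinely
independent. Hence two edges spanning three or four columns meet only in a common endpoint, while
two edges between the same two columns lie in one vertical plane, where the absence of
X-crossings keeps them apart. Minimality of `s` gives `s (K + 1) ≤ 2n`, hence the height
`q s ≤ 4n` and `s ≤ r`.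
-/

open Function Finset

theorem linearIndependent_natCast_of_cast_zmod_eq_pow {R : Type*} [CommRing R] [IsDomain R]
    [CharZero R] {n p : ℕ} [Fact p.Prime] {v : Fin n → Fin n → ℕ} {c : Fin n → ZMod p}
    (hc : Injective c)
    (hv : ∀ i j, (v i j : ZMod p) = c i ^ (j : ℕ)) :
    LinearIndependent R fun i j => (v i j : R) := by
  set A : Matrix (Fin n) (Fin n) ℤ := .of fun i j => v i j
  have hdet : A.det ≠ 0 := fun h => by
    have hmap : A.map (Int.cast : ℤ → ZMod p) = Matrix.vandermonde c := by
      ext i j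
      simpa [A] using hv i j
    apply Matrix.det_vandermonde_ne_zero_iff.mpr hc
    rw [← hmap, ← Int.cast_det, h, Int.cast_zero]
  convert Matrix.linearIndependent_rows_of_det_ne_zero
    (A := A.map (Int.cast : ℤ → R)) (by rwa [← Int.cast_det, Int.cast_ne_zero]) using 1
  ext i j
  simp [A]

theorem ZMod.natCast_comp_injective_of_lt {ι : Type*} {q : ℕ} {c : ι → ℕ} (hc : Injective c)
    (hcq : ∀ i, c i < q) : Injective fun i => (c i : ZMod q) := fun i j h => hc <| by
  simpa [Nat.mod_eq_of_lt (hcq i), Nat.mod_eq_of_lt (hcq j)] using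
    (ZMod.natCast_eq_natCast_iff' _ _ _).mp h

section MomentCurve

variable {q : ℕ}

/-- Slot `k` of column `c` lies at height `q k` above the point `(c, c², c³)` of the moment
curve reduced modulo `q`. -/
def momentPt (q c k : ℕ) : Fin 3 → ℤ := ![c, (c ^ 2 % q : ℕ), (q * k + c ^ 3 % q : ℕ)]

/-- Homogeneous coordinates of the projection of column `c` to the `xy`-plane. -/
def momentXY (q c : ℕ) : Fin 3 → ℕ := ![1, c, c ^ 2 % q]

def momentHom (q c k : ℕ) : Fin 4 → ℕ := ![1, c, c ^ 2 % q, q * k + c ^ 3 % q]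

theorem gridPt_momentPt_zero (q c k : ℕ) : gridPt (momentPt q c k) 0 = c :=
  Int.cast_natCast c

theorem gridPt_momentPt_one (q c k : ℕ) : gridPt (momentPt q c k) 1 = (c ^ 2 % q : ℕ) :=
  Int.cast_natCast _

theorem gridPt_momentPt_two (q c k : ℕ) :
    gridPt (momentPt q c k) 2 = (q * k + c ^ 3 % q : ℕ) :=
  Int.cast_natCast _

theorem strictMono_gridPt_momentPt_two (hq : 0 < q) (c : ℕ) :
    StrictMono fun k => gridPt (momentPt q c k) 2 := fun k k' h => by
  simp only [gridPt_momentPt_two, Nat.cast_lt]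
  exact Nat.add_lt_add_right (Nat.mul_lt_mul_of_pos_left h hq) _

theorem linearIndependent_momentXY (hq : q.Prime) {c : Fin 3 → ℕ} (hc : Injective c)
    (hcq : ∀ i, c i < q) : LinearIndependent ℝ fun i j => (momentXY q (c i) j : ℝ) := by
  have := Fact.mk hq
  refine linearIndependent_natCast_of_cast_zmod_eq_pow
    (ZMod.natCast_comp_injective_of_lt hc hcq) fun i j => ?_
  fin_cases j <;> simp [momentXY]

theorem linearIndependent_momentHom (hq : q.Prime) {c : Fin 4 → ℕ} (hc : Injective c)
    (hcq : ∀ i, c i < q) (k : Fin 4 → ℕ) :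
    LinearIndependent ℝ fun i j => (momentHom q (c i) (k i) j : ℝ) := by
  have := Fact.mk hq
  refine linearIndependent_natCast_of_cast_zmod_eq_pow
    (ZMod.natCast_comp_injective_of_lt hc hcq) fun i j => ?_
  fin_cases j <;> simp [momentHom]

end MomentCurve

section Columns

variable {q : ℕ}

theorem injective_triple {α : Type*} {a b c : α} (hab : a ≠ b) (hac : a ≠ c) (hbc : b ≠ c) :
    Injective ![a, b, c] := by
  intro i j h
  fin_cases i <;> fin_cases j <;> simp_all [eq_comm]

theorem eq_of_mem_segment_three_columns (hq : q.Prime) {γ β δ k₁ k₂ k₃ k₄ : ℕ}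
    (hγ : γ < q) (hβ : β < q) (hδ : δ < q) (hγβ : γ ≠ β) (hγδ : γ ≠ δ) (hβδ : β ≠ δ)
    {p : Fin 3 → ℝ} (h₁ : p ∈ segment ℝ (gridPt (momentPt q γ k₁)) (gridPt (momentPt q β k₂)))
    (h₂ : p ∈ segment ℝ (gridPt (momentPt q γ k₃)) (gridPt (momentPt q δ k₄))) :
    p = gridPt (momentPt q γ k₁) ∧ k₁ = k₃ := by
  obtain ⟨a, b, -, -, hab, rfl⟩ := h₁
  obtain ⟨a', b', -, -, hab', h⟩ := h₂
  have hx := congrFun h 0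
  have hy := congrFun h 1
  simp only [Pi.add_apply, Pi.smul_apply, smul_eq_mul, gridPt_momentPt_zero,
    gridPt_momentPt_one] at hx hy
  have hu := Fintype.linearIndependent_iff.mp (linearIndependent_momentXY hq
    (injective_triple hγβ hγδ hβδ) (by simp [Fin.forall_fin_succ, *])) ![a - a', b, -b'] (by
      ext j
      fin_cases j <;> simp [Fin.sum_univ_three, momentXY] <;> linarith)
  have hb : b = 0 := by simpa using hu 1
  have hb' : b' = 0 := by simpa using hu 2
  obtain rfl : a = 1 := by linarith
  obtain rfl : a' = 1 := by linarith
  subst hb hb'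
  simp only [one_smul, zero_smul, add_zero] at h
  exact ⟨by simp, (strictMono_gridPt_momentPt_two hq.pos γ).injective (congrFun h 2).symm⟩

theorem notMem_segment_three_columns (hq : q.Prime) {γ β δ k₁ k₂ k₃ : ℕ}
    (hγ : γ < q) (hβ : β < q) (hδ : δ < q) (hγβ : γ ≠ β) (hγδ : γ ≠ δ) (hβδ : β ≠ δ) :
    gridPt (momentPt q γ k₁) ∉ segment ℝ (gridPt (momentPt q β k₂)) (gridPt (momentPt q δ k₃)) := by
  rintro ⟨a, b, -, -, hab, h⟩
  have hx := congrFun h 0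
  have hy := congrFun h 1
  simp only [Pi.add_apply, Pi.smul_apply, smul_eq_mul, gridPt_momentPt_zero,
    gridPt_momentPt_one] at hx hy
  have hu := Fintype.linearIndependent_iff.mp (linearIndependent_momentXY hq
    (injective_triple hγβ hγδ hβδ) (by simp [Fin.forall_fin_succ, *])) ![1, -a, -b] (by
      ext j
      fin_cases j <;> simp [Fin.sum_univ_three, momentXY] <;> linarith)
  simpa using hu 0

theorem disjoint_segment_four_columns (hq : q.Prime) {c k : Fin 4 → ℕ} (hc : Injective c)
    (hcq : ∀ i, c i < q) :
    Disjoint (segment ℝ (gridPt (momentPt q (c 0) (k 0))) (gridPt (momentPt q (c 1) (k 1))))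
      (segment ℝ (gridPt (momentPt q (c 2) (k 2))) (gridPt (momentPt q (c 3) (k 3)))) := by
  refine Set.disjoint_left.2 fun p h₁ h₂ => ?_
  obtain ⟨a, b, -, -, hab, rfl⟩ := h₁
  obtain ⟨a', b', -, -, hab', h⟩ := h₂
  have hx := congrFun h 0
  have hy := congrFun h 1
  have hz := congrFun h 2
  simp only [Pi.add_apply, Pi.smul_apply, smul_eq_mul, gridPt_momentPt_zero,
    gridPt_momentPt_one, gridPt_momentPt_two] at hx hy hz
  push_cast at hz
  have hu := Fintype.linearIndependent_iff.mp (linearIndependent_momentHom hq hc hcq k)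
    ![a, b, -a', -b'] (by
      ext j
      fin_cases j <;> simp [Fin.sum_univ_four, momentHom] <;> linarith)
  have ha : a = 0 := by simpa using hu 0
  have hb : b = 0 := by simpa using hu 1
  linarith

theorem eq_of_mem_segment_same_column (hq : 0 < q) {γ δ k k₁ k₂ : ℕ} (hγδ : γ ≠ δ)
    (h : gridPt (momentPt q γ k) ∈
      segment ℝ (gridPt (momentPt q γ k₁)) (gridPt (momentPt q δ k₂))) : k = k₁ := by
  obtain ⟨a, b, -, -, hab, h⟩ := h
  have hx := congrFun h 0
  simp only [Pi.add_apply, Pi.smul_apply, smul_eq_mul, gridPt_momentPt_zero] at hx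
  have hb : b = 0 := by
    have : b * ((δ : ℝ) - γ) = 0 := by linear_combination hx - (γ : ℝ) * hab
    exact (mul_eq_zero.mp this).resolve_right (sub_ne_zero.mpr (by exact_mod_cast hγδ.symm))
  obtain rfl : a = 1 := by linarith
  subst hb
  simp only [one_smul, zero_smul, add_zero] at h
  exact (strictMono_gridPt_momentPt_two hq γ).injective (congrFun h 2).symm

theorem eq_of_mem_segment_two_columns (hq : 0 < q) {γ β k₁ k₂ k₃ k₄ : ℕ} (hγβ : γ ≠ β)
    (hne : ¬(k₁ = k₃ ∧ k₂ = k₄)) (hX : (k₁ ≤ k₃ ∧ k₂ ≤ k₄) ∨ (k₃ ≤ k₁ ∧ k₄ ≤ k₂))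
    {p : Fin 3 → ℝ} (h₁ : p ∈ segment ℝ (gridPt (momentPt q γ k₁)) (gridPt (momentPt q β k₂)))
    (h₂ : p ∈ segment ℝ (gridPt (momentPt q γ k₃)) (gridPt (momentPt q β k₄))) :
    (p = gridPt (momentPt q γ k₁) ∧ k₁ = k₃) ∨ (p = gridPt (momentPt q β k₂) ∧ k₂ = k₄) := by
  obtain ⟨a, b, ha, hb, hab, rfl⟩ := h₁
  obtain ⟨a', b', -, -, hab', h⟩ := h₂
  have hx := congrFun h 0
  have hz := congrFun h 2
  simp only [Pi.add_apply, Pi.smul_apply, smul_eq_mul, gridPt_momentPt_zero] at hx hz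
  obtain rfl : a = a' := by
    have : (a' - a) * ((γ : ℝ) - β) = 0 := by linear_combination hx - (β : ℝ) * (hab' - hab)
    exact (sub_eq_zero.mp <|
      (mul_eq_zero.mp this).resolve_right (sub_ne_zero.mpr (by exact_mod_cast hγβ))).symm
  obtain rfl : b = b' := by linarith
  have z := strictMono_gridPt_momentPt_two hq
  have hsplit : ∀ {u v : ℝ}, 0 ≤ u → 0 ≤ v → a * u + b * v = 0 →
      (a = 0 ∨ u = 0) ∧ (b = 0 ∨ v = 0) := fun hu hv huv => by
    obtain ⟨h₁, h₂⟩ := (add_eq_zero_iff_of_nonneg (mul_nonneg ha hu) (mul_nonneg hb hv)).1 huv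
    exact ⟨mul_eq_zero.1 h₁, mul_eq_zero.1 h₂⟩
  -- The `x`-coordinate forces equal weights on both segments; the height differences at the
  -- two ends then have one sign (no X-crossing), so each weighted difference vanishes.
  have hweights : (a = 0 ∨ k₁ = k₃) ∧ (b = 0 ∨ k₂ = k₄) := by
    rcases hX with ⟨h₁₃, h₂₄⟩ | ⟨h₃₁, h₄₂⟩
    · refine (hsplit (sub_nonneg.2 ((z γ).monotone h₁₃)) (sub_nonneg.2 ((z β).monotone h₂₄))
        (by linarith)).imp (Or.imp_right fun h => ?_) (Or.imp_right fun h => ?_)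
      · exact ((z γ).injective (sub_eq_zero.1 h)).symm
      · exact ((z β).injective (sub_eq_zero.1 h)).symm
    · refine (hsplit (sub_nonneg.2 ((z γ).monotone h₃₁)) (sub_nonneg.2 ((z β).monotone h₄₂))
        (by linarith)).imp (Or.imp_right fun h => ?_) (Or.imp_right fun h => ?_)
      · exact (z γ).injective (sub_eq_zero.1 h)
      · exact (z β).injective (sub_eq_zero.1 h)
  rcases hweights with ⟨rfl | rfl, rfl | rfl⟩
  · simp at hab
  · right; simp_all
  · left; simp_all
  · exact absurd ⟨rfl, rfl⟩ hne

end Columns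

namespace TrackLayout

variable {V : Type} {G : SimpleGraph V} {t q : ℕ} (L : TrackLayout V G t)

def momentPos (q : ℕ) (v : V) : Fin 3 → ℤ := momentPt q (L.track v) (L.pos v)

theorem momentPos_injective (hq : 0 < q) : Injective (L.momentPos q) := by
  intro v w h
  have ht : L.track v = L.track w := Fin.ext <| by simpa [momentPos, momentPt] using congrFun h 0
  refine L.inj v w ht ((strictMono_gridPt_momentPt_two hq (L.track v)).injective ?_)
  simpa [momentPos, ht] using congrArg (gridPt · 2) h

theorem eq_or_eq_of_mem_segment (hq : q.Prime) (htq : t < q) {v w x : V}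
    (hvw : L.track v ≠ L.track w)
    (h : gridPt (L.momentPos q x) ∈
      segment ℝ (gridPt (L.momentPos q v)) (gridPt (L.momentPos q w))) :
    x = v ∨ x = w := by
  have hlt : ∀ u, (L.track u : ℕ) < q := fun u => (L.track u).isLt.trans htq
  by_cases hxv : L.track x = L.track v
  · simp only [momentPos, hxv] at h
    exact Or.inl (L.inj x v hxv (eq_of_mem_segment_same_column hq.pos (Fin.val_injective.ne hvw) h))
  by_cases hxw : L.track x = L.track w
  · rw [segment_symm] at h
    simp only [momentPos, hxw] at h
    exact Or.inr (L.inj x w hxw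
      (eq_of_mem_segment_same_column hq.pos (Fin.val_injective.ne hvw.symm) h))
  exact (notMem_segment_three_columns hq (hlt x) (hlt v) (hlt w) (Fin.val_injective.ne hxv)
    (Fin.val_injective.ne hxw) (Fin.val_injective.ne hvw) h).elim

theorem eq_of_mem_segment_three_tracks (hq : q.Prime) (htq : t < q) {v w x y : V}
    (hvw : L.track v ≠ L.track w) (hxy : L.track x ≠ L.track y) (hvx : L.track v = L.track x)
    (hwy : L.track w ≠ L.track y) {p : Fin 3 → ℝ}
    (h₁ : p ∈ segment ℝ (gridPt (L.momentPos q v)) (gridPt (L.momentPos q w)))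
    (h₂ : p ∈ segment ℝ (gridPt (L.momentPos q x)) (gridPt (L.momentPos q y))) :
    p = gridPt (L.momentPos q v) ∧ v = x := by
  have hlt : ∀ u, (L.track u : ℕ) < q := fun u => (L.track u).isLt.trans htq
  simp only [momentPos, ← hvx] at h₂
  obtain ⟨hp, hpos⟩ := eq_of_mem_segment_three_columns hq (hlt v) (hlt w) (hlt y)
    (Fin.val_injective.ne hvw) (Fin.val_injective.ne (hvx ▸ hxy)) (Fin.val_injective.ne hwy)
    h₁ h₂
  exact ⟨hp, L.inj v x hvx hpos⟩

theorem eq_of_mem_segment_two_tracks (hq : 0 < q) {v w x y : V} (hvw : G.Adj v w) (hxy : G.Adj x y)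
    (hvx : L.track v = L.track x) (hwy : L.track w = L.track y) (hne : ¬(x = v ∧ y = w))
    {p : Fin 3 → ℝ}
    (h₁ : p ∈ segment ℝ (gridPt (L.momentPos q v)) (gridPt (L.momentPos q w)))
    (h₂ : p ∈ segment ℝ (gridPt (L.momentPos q x)) (gridPt (L.momentPos q y))) :
    (p = gridPt (L.momentPos q v) ∧ v = x) ∨ (p = gridPt (L.momentPos q w) ∧ w = y) := by
  have hX : (L.pos v ≤ L.pos x ∧ L.pos w ≤ L.pos y) ∨ (L.pos x ≤ L.pos v ∧ L.pos y ≤ L.pos w) := by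
    rcases lt_trichotomy (L.pos v) (L.pos x) with hlt | heq | hgt
    · exact Or.inl ⟨hlt.le, not_lt.1 (L.noX v w x y hvw hxy hvx hwy (L.proper v w hvw) hlt)⟩
    · exact (le_total (L.pos w) (L.pos y)).imp (⟨heq.le, ·⟩) (⟨heq.ge, ·⟩)
    · exact Or.inr ⟨hgt.le, not_lt.1
        (L.noX x y v w hxy hvw hvx.symm hwy.symm (L.proper x y hxy) hgt)⟩
  simp only [momentPos, ← hvx, ← hwy] at h₂
  refine (eq_of_mem_segment_two_columns hq (Fin.val_injective.ne (L.proper v w hvw))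
    (fun h => hne ⟨(L.inj v x hvx h.1).symm, (L.inj w y hwy h.2).symm⟩) hX h₁ h₂).imp
    (And.imp_right (L.inj v x hvx)) (And.imp_right (L.inj w y hwy))

theorem eq_endpoint_of_mem_segment_of_adj (hq : q.Prime) (htq : t < q) {v w x y : V}
    (hvw : G.Adj v w) (hxy : G.Adj x y) (hne : ¬((x = v ∧ y = w) ∨ (x = w ∧ y = v))) {p : Fin 3 → ℝ}
    (h₁ : p ∈ segment ℝ (gridPt (L.momentPos q v)) (gridPt (L.momentPos q w)))
    (h₂ : p ∈ segment ℝ (gridPt (L.momentPos q x)) (gridPt (L.momentPos q y))) :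
    (p = gridPt (L.momentPos q v) ∧ (v = x ∨ v = y)) ∨
      (p = gridPt (L.momentPos q w) ∧ (w = x ∨ w = y)) := by
  have hvw' := L.proper v w hvw
  have hxy' := L.proper x y hxy
  have h₁' : p ∈ segment ℝ (gridPt (L.momentPos q w)) (gridPt (L.momentPos q v)) := by
    rwa [segment_symm]
  have h₂' : p ∈ segment ℝ (gridPt (L.momentPos q y)) (gridPt (L.momentPos q x)) := by
    rwa [segment_symm]
  by_cases hvx : L.track v = L.track x
  · by_cases hwy : L.track w = L.track y
    · rcases L.eq_of_mem_segment_two_tracks hq.pos hvw hxy hvx hwy (hne <| .inl ·) h₁ h₂ with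
        ⟨hp, rfl⟩ | ⟨hp, rfl⟩
      exacts [.inl ⟨hp, .inl rfl⟩, .inr ⟨hp, .inr rfl⟩]
    obtain ⟨hp, rfl⟩ := L.eq_of_mem_segment_three_tracks hq htq hvw' hxy' hvx hwy h₁ h₂
    exact .inl ⟨hp, .inl rfl⟩
  by_cases hvy : L.track v = L.track y
  · by_cases hwx : L.track w = L.track x
    · rcases L.eq_of_mem_segment_two_tracks hq.pos hvw hxy.symm hvy hwx (fun h => hne (.inr h.symm))
        h₁ h₂' with ⟨hp, rfl⟩ | ⟨hp, rfl⟩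
      exacts [.inl ⟨hp, .inr rfl⟩, .inr ⟨hp, .inl rfl⟩]
    obtain ⟨hp, rfl⟩ := L.eq_of_mem_segment_three_tracks hq htq hvw' hxy'.symm hvy hwx h₁ h₂'
    exact .inl ⟨hp, .inr rfl⟩
  by_cases hwx : L.track w = L.track x
  · obtain ⟨hp, rfl⟩ := L.eq_of_mem_segment_three_tracks hq htq hvw'.symm hxy' hwx hvy h₁' h₂
    exact .inr ⟨hp, .inl rfl⟩
  by_cases hwy : L.track w = L.track y
  · obtain ⟨hp, rfl⟩ := L.eq_of_mem_segment_three_tracks hq htq hvw'.symm hxy'.symm hwy hvx h₁' h₂'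
    exact .inr ⟨hp, .inr rfl⟩
  have hlt : ∀ u, (L.track u : ℕ) < q := fun u => (L.track u).isLt.trans htq
  have hc : Injective ![(L.track v : ℕ), L.track w, L.track x, L.track y] := by
    intro i j h
    fin_cases i <;> fin_cases j <;> simp_all [Fin.val_inj, eq_comm]
  exact (Set.disjoint_left.1 (disjoint_segment_four_columns (k := ![L.pos v, L.pos w, L.pos x,
    L.pos y]) hq hc (by simp [Fin.forall_fin_succ, hlt])) h₁ h₂).elim

def drawing (hq : q.Prime) (htq : t < q) : Drawing3D V G where
  pos := L.momentPos q
  inj := L.momentPos_injective hq.pos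
  vertexDisjoint _ _ _ hvw := L.eq_or_eq_of_mem_segment hq htq (L.proper _ _ hvw)
  edgesDisjoint _ _ _ _ hvw hxy hne _ := L.eq_endpoint_of_mem_segment_of_adj hq htq hvw hxy hne

theorem drawing_inBox (hq : q.Prime) (htq : t < q) {s : ℕ} (hs : ∀ v, L.pos v < s) :
    (L.drawing hq htq).InBox t q (q * s) := by
  refine ⟨0, fun v => ?_⟩
  have h1 : L.track v < t := (L.track v).isLt
  have h2 : (L.track v : ℕ) ^ 2 % q < q := Nat.mod_lt _ hq.pos
  have h3 : q * L.pos v + (L.track v : ℕ) ^ 3 % q < q * s := by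
    have := Nat.mod_lt ((L.track v : ℕ) ^ 3) hq.pos
    have := Nat.mul_le_mul_left q (hs v)
    rw [Nat.mul_succ] at this
    omega
  simp only [Pi.zero_apply, zero_add]
  exact ⟨Nat.cast_nonneg _, Nat.cast_lt.2 h1, Nat.cast_nonneg _, Nat.cast_lt.2 h2,
    Nat.cast_nonneg _, Nat.cast_lt.2 h3⟩

end TrackLayout

namespace TrackLayout

variable {V : Type} [Fintype V] {G : SimpleGraph V} {t : ℕ} (L : TrackLayout V G t)

def trackSize (i : Fin t) : ℕ := #{v | L.track v = i}

def rank (v : V) : ℕ := #{u | L.track u = L.track v ∧ L.pos u < L.pos v}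

variable {L}

theorem rank_lt_trackSize (v : V) : L.rank v < L.trackSize (L.track v) :=
  card_lt_card <| (ssubset_iff_of_subset fun u hu => by simp_all).2
    ⟨v, by simp, by simp⟩

theorem rank_le_rank {u v : V} (h : L.track u = L.track v) (hp : L.pos u ≤ L.pos v) :
    L.rank u ≤ L.rank v :=
  card_le_card fun x hx => by simp_all only [mem_filter, mem_univ, true_and]; omega

theorem rank_lt_rank {u v : V} (h : L.track u = L.track v) (hp : L.pos u < L.pos v) :
    L.rank u < L.rank v :=
  card_lt_card <| (ssubset_iff_of_subset fun x hx => by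
    simp_all only [mem_filter, mem_univ, true_and]; omega).2
    ⟨u, by simp [h, hp], by simp⟩

theorem rank_lt_rank_iff {u v : V} (h : L.track u = L.track v) :
    L.rank u < L.rank v ↔ L.pos u < L.pos v :=
  ⟨fun hr => lt_of_not_ge fun hp => (rank_le_rank h.symm hp).not_gt hr, rank_lt_rank h⟩

theorem eq_of_rank_eq {u v : V} (h : L.track u = L.track v) (hr : L.rank u = L.rank v) :
    u = v :=
  L.inj u v h (le_antisymm (not_lt.1 fun hp => (rank_lt_rank h.symm hp).ne' hr)
    (not_lt.1 fun hp => (rank_lt_rank h hp).ne hr))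

theorem sum_trackSize : ∑ i, L.trackSize i = Fintype.card V :=
  (card_eq_sum_card_fiberwise fun v _ => mem_univ (L.track v)).symm

variable (L)

def numSplitTracks (s : ℕ) : ℕ := ∑ i, L.trackSize i ⌈/⌉ s

variable {s : ℕ}

theorem rank_div_lt (hs : 0 < s) (v : V) : L.rank v / s < L.trackSize (L.track v) ⌈/⌉ s :=
  lt_of_not_ge fun h => ((ceilDiv_le_iff_le_mul hs).1 h).not_gt <|
    (Nat.mul_div_le _ _).trans_lt (rank_lt_trackSize v)

def splitTrack (hs : 0 < s) (v : V) : Fin (L.numSplitTracks s) :=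
  finSigmaFinEquiv ⟨L.track v, ⟨L.rank v / s, L.rank_div_lt hs v⟩⟩

variable {L}

theorem splitTrack_eq_splitTrack {hs : 0 < s} {u v : V}
    (h : L.splitTrack hs u = L.splitTrack hs v) :
    L.track u = L.track v ∧ L.rank u / s = L.rank v / s := by
  obtain ⟨htr, hr⟩ := Sigma.mk.inj_iff.1 (finSigmaFinEquiv.injective h)
  exact ⟨htr, by simpa using (Fin.heq_ext_iff (by rw [htr])).1 hr⟩

theorem pos_lt_of_splitTrack_eq {hs : 0 < s} {u v : V} (h : L.splitTrack hs u = L.splitTrack hs v)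
    (hr : L.rank u % s < L.rank v % s) : L.pos u < L.pos v := by
  obtain ⟨htr, hdiv⟩ := splitTrack_eq_splitTrack h
  refine (rank_lt_rank_iff htr).1 ?_
  rw [← Nat.div_add_mod (L.rank u) s, ← Nat.div_add_mod (L.rank v) s, hdiv]
  omega

variable (L)

def split (hs : 0 < s) : TrackLayout V G (L.numSplitTracks s) where
  track := L.splitTrack hs
  pos v := L.rank v % s
  inj u v h hr := by
    obtain ⟨htr, hdiv⟩ := splitTrack_eq_splitTrack h
    refine eq_of_rank_eq htr ?_
    rw [← Nat.div_add_mod (L.rank u) s, ← Nat.div_add_mod (L.rank v) s, hdiv, hr]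
  proper v w hvw h := L.proper v w hvw (splitTrack_eq_splitTrack h).1
  noX v w x y hvw hxy hvx hwy _ h₁ h₂ := L.noX v w x y hvw hxy
    (splitTrack_eq_splitTrack hvx).1 (splitTrack_eq_splitTrack hwy).1 (L.proper v w hvw)
    (pos_lt_of_splitTrack_eq hvx h₁) (pos_lt_of_splitTrack_eq hwy.symm h₂)

theorem split_pos_lt (hs : 0 < s) (v : V) : (L.split hs).pos v < s := Nat.mod_lt _ hs

theorem mul_numSplitTracks_le (d : ℕ) : d * L.numSplitTracks d ≤ Fintype.card V + (d - 1) * t := by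
  calc d * L.numSplitTracks d = ∑ i, d * (L.trackSize i ⌈/⌉ d) := mul_sum _ _ _
    _ ≤ ∑ i, (L.trackSize i + (d - 1)) := sum_le_sum fun i _ => by
        rw [Nat.ceilDiv_eq_add_pred_div]
        have := Nat.mul_div_le (L.trackSize i + d - 1) d
        omega
    _ = Fintype.card V + (d - 1) * t := by simp [sum_add_distrib, sum_trackSize, mul_comm]

theorem numSplitTracks_le (hs : Fintype.card V ≤ s) (hs0 : 0 < s) : L.numSplitTracks s ≤ t := by
  calc L.numSplitTracks s ≤ ∑ _i : Fin t, 1 := sum_le_sum fun i _ =>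
        (ceilDiv_le_iff_le_mul hs0).2 (by
          rw [mul_one]
          exact (card_le_univ _).trans hs)
    _ = t := by simp

theorem exists_numSplitTracks_le {K : ℕ} (hK : 2 * t ≤ K) :
    ∃ s, 0 < s ∧ L.numSplitTracks s ≤ K ∧ (s = 1 ∨ s * (K + 1) ≤ 2 * Fintype.card V) := by
  have hex : ∃ s, 0 < s ∧ L.numSplitTracks s ≤ K :=
    ⟨Fintype.card V + 1, Nat.succ_pos _,
      (L.numSplitTracks_le (by omega) (by omega)).trans (by omega)⟩
  obtain ⟨hs, hsK⟩ := Nat.find_spec hex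
  refine ⟨Nat.find hex, hs, hsK, (Nat.lt_or_ge (Nat.find hex) 2).imp (by omega) fun h2 => ?_⟩
  obtain ⟨m, hm⟩ : ∃ m, Nat.find hex = m + 2 := ⟨Nat.find hex - 2, by omega⟩
  have hmin : K + 1 ≤ L.numSplitTracks (m + 1) :=
    not_le.1 fun h => Nat.find_min hex (by omega : m + 1 < Nat.find hex) ⟨by omega, h⟩
  -- `(s - 1) (K + 1) ≤ (s - 1) · numSplitTracks (s - 1) ≤ n + (s - 2) t` and `2 t ≤ K`
  have hcount := L.mul_numSplitTracks_le (m + 1)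
  rw [Nat.add_sub_cancel] at hcount
  rw [hm]
  nlinarith [Nat.mul_le_mul_left (m + 1) hmin, Nat.mul_le_mul_left m hK]

end TrackLayout

theorem Drawing3D.InBox.mono {V : Type} {G : SimpleGraph V} {D : Drawing3D V G}
    {X Y Z X' Y' Z' : ℕ} (h : D.InBox X Y Z) (hX : X ≤ X') (hY : Y ≤ Y') (hZ : Z ≤ Z') :
    D.InBox X' Y' Z' := by
  obtain ⟨o, ho⟩ := h
  exact ⟨o, fun v => by have := ho v; omega⟩

theorem runLength_bounds {n K s : ℕ} {r : ℝ} (hr : 1 ≤ r) (hK : (K : ℝ) ≤ 2 * n / r)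
    (hK' : 2 * n / r < K + 1) (hs : s = 1 ∨ s * (K + 1) ≤ 2 * n) :
    (s : ℝ) * K ≤ 2 * n ∧ (s : ℝ) ≤ r := by
  have hr0 : 0 < r := by linarith
  have hK0 := Nat.cast_nonneg (α := ℝ) K
  rcases hs with rfl | hs
  · rw [le_div_iff₀ hr0] at hK
    exact ⟨by rw [Nat.cast_one, one_mul]; nlinarith, by simpa using hr⟩
  · rw [div_lt_iff₀ hr0] at hK'
    have hs' : (s : ℝ) * (K + 1) ≤ 2 * n := by exact_mod_cast hs
    constructor <;> nlinarith

theorem volume_le_and_aspect_le {X Y Z : ℕ} {n r : ℝ} (hr : 0 < r) (hX : (X : ℝ) ≤ 2 * n / r)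
    (hY : (Y : ℝ) ≤ 4 * n / r) (hZ : (Z : ℝ) ≤ 4 * n) (hXY : X ≤ Y) (hYZ : Y ≤ Z)
    (hZX : (Z : ℝ) ≤ 2 * r * X) :
    (X : ℝ) * Y * Z ≤ 32 * n ^ 3 / r ^ 2 ∧
      (max X (max Y Z) : ℝ) ≤ 2 * r * (min X (min Y Z) : ℝ) := by
  have hX0 : (0 : ℝ) ≤ 2 * n / r := (Nat.cast_nonneg X).trans hX
  have hY0 : (0 : ℝ) ≤ 4 * n / r := (Nat.cast_nonneg Y).trans hY
  refine ⟨?_, ?_⟩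
  · calc (X : ℝ) * Y * Z ≤ 2 * n / r * (4 * n / r) * (4 * n) := by gcongr
      _ = 32 * n ^ 3 / r ^ 2 := by field_simp; ring
  · have hXY' : (X : ℝ) ≤ Y := by exact_mod_cast hXY
    have hYZ' : (Y : ℝ) ≤ Z := by exact_mod_cast hYZ
    rwa [max_eq_right hYZ', max_eq_right (hXY'.trans hYZ'), min_eq_left hYZ', min_eq_left hXY']

/-- For every `n`-vertex graph `G` with track-number `tn(G)`, and
every real `r` with `1 ≤ r ≤ n / tn(G)`, `G` has a three-dimensional drawing of
dimensions at most `(2n/r) × (4n/r) × 4n`; thus `G` has a drawing with volume at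
most `32 n³ / r²` and aspect ratio at most `2r`. -/
theorem drawing_aspect_ratio_tradeoff {V : Type} [Fintype V] (G : SimpleGraph V)
    (r : ℝ) (hr1 : 1 ≤ r)
    (hr2 : r ≤ (Fintype.card V : ℝ) / (trackNumber V G : ℝ)) :
    ∃ (X Y Z : ℕ) (D : Drawing3D V G), D.InBox X Y Z ∧
      (X : ℝ) ≤ 2 * (Fintype.card V : ℝ) / r ∧
      (Y : ℝ) ≤ 4 * (Fintype.card V : ℝ) / r ∧
      (Z : ℝ) ≤ 4 * (Fintype.card V : ℝ) ∧
      (X : ℝ) * (Y : ℝ) * (Z : ℝ) ≤ 32 * (Fintype.card V : ℝ) ^ 3 / r ^ 2 ∧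
      (max X (max Y Z) : ℝ) ≤ 2 * r * (min X (min Y Z) : ℝ) := by
  set n := Fintype.card V
  set t := trackNumber V G
  have hr0 : 0 < r := by linarith
  have ht : 0 < t := Nat.pos_of_ne_zero fun h => by simp [h] at hr2; linarith
  obtain ⟨L⟩ : Nonempty (TrackLayout V G t) := Nat.sInf_mem (Nat.nonempty_of_pos_sInf ht)
  set K := ⌊2 * (n : ℝ) / r⌋₊
  have hK : (K : ℝ) ≤ 2 * n / r := Nat.floor_le (by positivity)
  have htK : 2 * t ≤ K := Nat.le_floor <| by
    rw [le_div_iff₀ hr0]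
    push_cast
    nlinarith [(le_div_iff₀ (by positivity : (0 : ℝ) < t)).1 hr2]
  obtain ⟨s, hs, hsK, hs1⟩ := L.exists_numSplitTracks_le htK
  obtain ⟨hsK', hsr⟩ := runLength_bounds hr1 hK (Nat.lt_floor_add_one _) hs1
  obtain ⟨q, hq, hKq, hqK⟩ := Nat.exists_prime_lt_and_le_two_mul K (by omega)
  have hqK' : (q : ℝ) ≤ 2 * K := by exact_mod_cast hqK
  have hY : (q : ℝ) ≤ 4 * n / r :=
    calc (q : ℝ) ≤ 2 * (2 * n / r) := by linarith
      _ = 4 * n / r := by ring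
  have hZ : ((q * s : ℕ) : ℝ) ≤ 4 * n := by push_cast; nlinarith
  have hZK : ((q * s : ℕ) : ℝ) ≤ 2 * r * K := by push_cast; nlinarith [Nat.cast_nonneg (α := ℝ) q]
  refine ⟨K, q, q * s, _, ((L.split hs).drawing_inBox hq (hsK.trans_lt hKq)
    (L.split_pos_lt hs)).mono hsK le_rfl le_rfl, hK, hY, hZ, volume_le_and_aspect_le hr0 hK hY hZ
    hKq.le (Nat.le_mul_of_pos_right q hs) hZK⟩
end

section
/- If a graph G has a t-track layout, with tracks numbered 1,…,t, in which every edge has span at most s (s ≤ t−1), then G has queue-number qn(G) ≤ s. If G has an improper t-track layout with maximum edge span s, then qn(G) ≤ s + 1. -/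
open SimpleGraph


lemma natKeyLt {N a b c d : ℕ} (hb : b < N) (hd : d < N) (h : a * N + b < c * N + d) :
    a < c ∨ (a = c ∧ b < d) := by
  rcases lt_trichotomy a c with h1 | h1 | h1
  · exact Or.inl h1
  · subst h1; exact Or.inr ⟨rfl, by omega⟩
  · exfalso
    have h2 : c * N + N ≤ a * N := by
      calc c * N + N = (c + 1) * N := by ring
        _ ≤ a * N := Nat.mul_le_mul_right N h1
    omega

lemma natKeyEq {N a b c d : ℕ} (hb : b < N) (hd : d < N) (h : a * N + b = c * N + d) :
    a = c ∧ b = d := by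
  rcases lt_trichotomy a c with h1 | h1 | h1
  · have h2 : a * N + N ≤ c * N := by
      calc a * N + N = (a + 1) * N := by ring
        _ ≤ c * N := Nat.mul_le_mul_right N h1
    omega
  · subst h1; omega
  · have h2 : c * N + N ≤ a * N := by
      calc c * N + N = (c + 1) * N := by ring
        _ ≤ a * N := Nat.mul_le_mul_right N h1
    omega

lemma ordAux {V : Type} [Fintype V] {t : ℕ} (tr : V → Fin t) (p : V → ℕ)
    (inj : ∀ v w : V, tr v = tr w → p v = p w → v = w) :
    ∃ ord : V → ℕ, Function.Injective ord ∧
      ∀ v w : V, ord v < ord w → (tr v : ℕ) < tr w ∨ (tr v = tr w ∧ p v < p w) := by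
  classical
  set N := (Finset.univ.sup p) + 1 with hNdef
  have hN : ∀ v, p v < N := fun v => Nat.lt_succ_of_le (Finset.le_sup (Finset.mem_univ v))
  refine ⟨fun v => (tr v : ℕ) * N + p v, ?_, ?_⟩
  · intro v w h
    simp only at h
    obtain ⟨h1, h2⟩ := natKeyEq (hN v) (hN w) h
    exact inj v w (Fin.ext h1) h2
  · intro v w h
    rcases natKeyLt (hN v) (hN w) h with h1 | ⟨h1, h2⟩
    · exact Or.inl h1
    · exact Or.inr ⟨Fin.ext h1, h2⟩


/-- An improper track layout of `G` with `t` tracks: adjacent vertices may share a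
track, but then they must be consecutive in that track; and there is no X-crossing. -/
structure ImproperTrackLayout (V : Type) (G : SimpleGraph V) (t : ℕ) where
  /-- the track containing each vertex -/
  track : V → Fin t
  /-- the position of each vertex within its track -/
  pos : V → ℕ
  /-- distinct vertices on a common track occupy distinct positions -/
  inj : ∀ v w : V, track v = track w → pos v = pos w → v = w
  /-- adjacent vertices on a common track are consecutive in that track -/
  consecutive : ∀ v w x : V, G.Adj v w → track v = track w → track x = track v →
    pos v < pos x → pos x < pos w → False
  /-- no X-crossing -/
  noX : ∀ v w x y : V, G.Adj v w → G.Adj x y →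
    track v = track x → track w = track y → track v ≠ track w →
    pos v < pos x → pos y < pos w → False
/-- A queue layout of `G` with `q` queues: a vertex-ordering (given by an injection
`ord : V → ℕ`) together with an assignment of the edges to queues `0, …, q-1`
such that no two edges in a common queue are nested. -/
structure QueueLayout (V : Type) (G : SimpleGraph V) (q : ℕ) where
  /-- the vertex-ordering -/
  ord : V → ℕ
  ordInj : Function.Injective ord
  /-- the queue assigned to each edge -/
  queue : V → V → ℕ
  queueSymm : ∀ v w : V, queue v w = queue w v
  queueLt : ∀ v w : V, G.Adj v w → queue v w < q
  /-- no two edges in a common queue are nested -/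
  noNested : ∀ v w x y : V, G.Adj v w → G.Adj x y → queue v w = queue x y →
    ord v < ord x → ord x < ord y → ord y < ord w → False
/-- The queue-number of `G`: the minimum number of queues in a queue layout of `G`. -/
noncomputable def queueNumber (V : Type) (G : SimpleGraph V) : ℕ :=
  sInf {q : ℕ | Nonempty (QueueLayout V G q)}

/-- If a graph `G` has a `t`-track layout, tracks numbered
`1, …, t`, in which every edge has span at most `s` (`s ≤ t - 1`), then
`qn(G) ≤ s`. If `G` has an improper `t`-track layout with maximum edge span `s`,
then `qn(G) ≤ s + 1`. -/
theorem queueNumber_le_span {V : Type} [Fintype V] (G : SimpleGraph V)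
    (t s : ℕ) (hs : s ≤ t - 1) :
    (∀ L : TrackLayout V G t,
      (∀ v w : V, G.Adj v w → Nat.dist (L.track v : ℕ) (L.track w : ℕ) ≤ s) →
      queueNumber V G ≤ s) ∧
    (∀ L : ImproperTrackLayout V G t,
      (∀ v w : V, G.Adj v w → Nat.dist (L.track v : ℕ) (L.track w : ℕ) ≤ s) →
      queueNumber V G ≤ s + 1) := by
  have hdist : ∀ a b : ℕ, Nat.dist a b = a - b + (b - a) := fun a b => rfl
  constructor
  · intro L hspan
    obtain ⟨ord, ordInj, key⟩ := ordAux L.track L.pos L.inj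
    have hq : Nonempty (QueueLayout V G s) := by
      refine ⟨⟨ord, ordInj,
        fun v w => Nat.dist (L.track v : ℕ) (L.track w : ℕ) - 1,
        fun v w => by simp only [Nat.dist_comm], ?_, ?_⟩⟩
      · intro v w hadj
        show Nat.dist (L.track v : ℕ) (L.track w : ℕ) - 1 < s
        have h1 := hspan v w hadj
        have h2 : (L.track v : ℕ) ≠ (L.track w : ℕ) :=
          fun h => L.proper v w hadj (Fin.ext h)
        have h3 := hdist (L.track v : ℕ) (L.track w : ℕ)
        omega
      · intro v w x y hvw hxy hqeq h1 h2 h3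
        have hqeq' : Nat.dist (L.track v : ℕ) (L.track w : ℕ) - 1 =
            Nat.dist (L.track x : ℕ) (L.track y : ℕ) - 1 := hqeq
        have kvx := key v x h1
        have kxy := key x y h2
        have kyw := key y w h3
        have kvw := key v w (by omega)
        have hvx : (L.track v : ℕ) ≤ L.track x := by
          rcases kvx with h | ⟨h, _⟩
          · omega
          · rw [h]
        have hxy' : (L.track x : ℕ) ≤ L.track y := by
          rcases kxy with h | ⟨h, _⟩
          · omega
          · rw [h]
        have hyw : (L.track y : ℕ) ≤ L.track w := by
          rcases kyw with h | ⟨h, _⟩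
          · omega
          · rw [h]
        have hvw' : (L.track v : ℕ) ≠ (L.track w : ℕ) :=
          fun h => L.proper v w hvw (Fin.ext h)
        have hxy'' : (L.track x : ℕ) ≠ (L.track y : ℕ) :=
          fun h => L.proper x y hxy (Fin.ext h)
        have d1 := hdist (L.track v : ℕ) (L.track w : ℕ)
        have d2 := hdist (L.track x : ℕ) (L.track y : ℕ)
        have heq1 : (L.track v : ℕ) = L.track x := by omega
        have heq2 : (L.track w : ℕ) = L.track y := by omega
        have hp1 : L.pos v < L.pos x := by
          rcases kvx with h | ⟨_, h⟩
          · omega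
          · exact h
        have hp2 : L.pos y < L.pos w := by
          rcases kyw with h | ⟨_, h⟩
          · omega
          · exact h
        exact L.noX v w x y hvw hxy (Fin.ext heq1) (Fin.ext heq2)
          (fun h => hvw' (congrArg Fin.val h)) hp1 hp2
    exact Nat.sInf_le hq
  · intro L hspan
    obtain ⟨ord, ordInj, key⟩ := ordAux L.track L.pos L.inj
    have hq : Nonempty (QueueLayout V G (s + 1)) := by
      refine ⟨⟨ord, ordInj,
        fun v w => Nat.dist (L.track v : ℕ) (L.track w : ℕ),
        fun v w => by simp only [Nat.dist_comm], ?_, ?_⟩⟩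
      · intro v w hadj
        show Nat.dist (L.track v : ℕ) (L.track w : ℕ) < s + 1
        have h1 := hspan v w hadj
        omega
      · intro v w x y hvw hxy hqeq h1 h2 h3
        have hqeq' : Nat.dist (L.track v : ℕ) (L.track w : ℕ) =
            Nat.dist (L.track x : ℕ) (L.track y : ℕ) := hqeq
        have kvx := key v x h1
        have kxy := key x y h2
        have kyw := key y w h3
        have kvw := key v w (by omega)
        have hvx : (L.track v : ℕ) ≤ L.track x := by
          rcases kvx with h | ⟨h, _⟩
          · omega
          · rw [h]
        have hxy' : (L.track x : ℕ) ≤ L.track y := by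
          rcases kxy with h | ⟨h, _⟩
          · omega
          · rw [h]
        have hyw : (L.track y : ℕ) ≤ L.track w := by
          rcases kyw with h | ⟨h, _⟩
          · omega
          · rw [h]
        have hvw' : (L.track v : ℕ) ≤ L.track w := by
          rcases kvw with h | ⟨h, _⟩
          · omega
          · rw [h]
        have d1 := hdist (L.track v : ℕ) (L.track w : ℕ)
        have d2 := hdist (L.track x : ℕ) (L.track y : ℕ)
        have heq1 : (L.track v : ℕ) = L.track x := by omega
        have heq2 : (L.track w : ℕ) = L.track y := by omega
        have hp1 : L.pos v < L.pos x := by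
          rcases kvx with h | ⟨_, h⟩
          · omega
          · exact h
        have hp2 : L.pos y < L.pos w := by
          rcases kyw with h | ⟨_, h⟩
          · omega
          · exact h
        by_cases htw : L.track v = L.track w
        · -- all four on the same track
          have hall : (L.track x : ℕ) = (L.track y : ℕ) := by
            have := congrArg Fin.val htw; omega
          have hp3 : L.pos x < L.pos y := by
            rcases kxy with h | ⟨_, h⟩
            · omega
            · exact h
          exact L.consecutive v w x hvw htw (Fin.ext heq1.symm) hp1 (by omega)
        · exact L.noX v w x y hvw hxy (Fin.ext heq1) (Fin.ext heq2) htw hp1 hp2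
    exact Nat.sInf_le hq
end

section
/- Let {(V_i, <_i) : i ∈ I} be a track layout of a graph G and let L ⊆ I be a set of tracks. If S is a set of cliques of G each of which covers exactly the set of tracks L, then S is nicely ordered by the track layout; that is, there is a total order ⪯ on S such that whenever vertices v ∈ C₁ and w ∈ C₂ (C₁, C₂ ∈ S) lie in a common track with v < w in that track, then C₁ ⪯ C₂. -/
open SimpleGraph

/-- Let `L` be a track layout of `G` and let `Lset` be a set of
tracks. If `S` is a set of cliques of `G`, each of which covers exactly the set of
tracks `Lset`, then `S` is nicely ordered by the track layout: there is a (linear)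
total order `r` on `S` such that whenever vertices `v ∈ C₁` and `w ∈ C₂`
(`C₁, C₂ ∈ S`) lie in a common track with `v < w` in that track, then `C₁ ⪯ C₂`. -/
theorem cliques_nicely_ordered {V : Type} [Fintype V] (G : SimpleGraph V)
    (t : ℕ) (L : TrackLayout V G t) (Lset : Set (Fin t)) (S : Set (Set V))
    (hclique : ∀ C ∈ S, G.IsClique C)
    (hcover : ∀ C ∈ S, {i : Fin t | ∃ v ∈ C, L.track v = i} = Lset) :
    ∃ r : {C : Set V // C ∈ S} → {C : Set V // C ∈ S} → Prop,
      IsLinearOrder {C : Set V // C ∈ S} r ∧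
      ∀ (C₁ C₂ : {C : Set V // C ∈ S}) (v w : V), v ∈ C₁.1 → w ∈ C₂.1 →
        L.track v = L.track w → L.pos v < L.pos w → r C₁ C₂ := by
  -- unique vertex per track in a clique
  have huniq : ∀ C ∈ S, ∀ v ∈ C, ∀ w ∈ C, L.track v = L.track w → v = w := by
    intro C hC v hv w hw htr
    by_contra hne
    exact L.proper v w (hclique C hC hv hw hne) htr
  -- key lemma: a strict inequality in one track forces ≤ in all tracks
  have key : ∀ C₁ ∈ S, ∀ C₂ ∈ S, ∀ v ∈ C₁, ∀ w ∈ C₂,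
      L.track v = L.track w → L.pos v < L.pos w →
      ∀ a ∈ C₁, ∀ b ∈ C₂, L.track a = L.track b → L.pos a ≤ L.pos b := by
    intro C₁ h₁ C₂ h₂ v hv w hw htr hlt a ha b hb htab
    by_cases hji : L.track a = L.track v
    · have hav : a = v := huniq C₁ h₁ a ha v hv hji
      have hbw : b = w := huniq C₂ h₂ b hb w hw (htab.symm.trans (hji.trans htr))
      subst hav; subst hbw; exact le_of_lt hlt
    · by_contra hba
      push_neg at hba
      have hvne : v ≠ a := fun h => hji (by rw [h])
      have hwne : w ≠ b := fun h => hji (by rw [htab, ← h, ← htr])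
      have hadj1 : G.Adj v a := hclique C₁ h₁ hv ha hvne
      have hadj2 : G.Adj w b := hclique C₂ h₂ hw hb hwne
      exact L.noX v a w b hadj1 hadj2 htr htab
        (fun h => hji h.symm) hlt hba
  refine ⟨fun C₁ C₂ => ∀ a ∈ C₁.1, ∀ b ∈ C₂.1, L.track a = L.track b →
      L.pos a ≤ L.pos b, { refl := ?_, trans := ?_, antisymm := ?_, total := ?_ }, ?_⟩
  · -- refl
    intro C a ha b hb htab
    exact le_of_eq (congrArg L.pos (huniq C.1 C.2 a ha b hb htab))
  · -- trans
    intro C₁ C₂ C₃ h12 h23 a ha b hb htab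
    have hmem : L.track a ∈ Lset := by
      rw [← hcover C₁.1 C₁.2]; exact ⟨a, ha, rfl⟩
    have : L.track a ∈ {i : Fin t | ∃ v ∈ C₂.1, L.track v = i} := by
      rw [hcover C₂.1 C₂.2]; exact hmem
    obtain ⟨u, hu, htu⟩ := this
    exact le_trans (h12 a ha u hu htu.symm) (h23 u hu b hb (htu.trans htab))
  · -- antisymm
    intro C₁ C₂ h12 h21
    apply Subtype.ext
    apply Set.eq_of_subset_of_subset
    · intro a ha
      have hmem : L.track a ∈ Lset := by
        rw [← hcover C₁.1 C₁.2]; exact ⟨a, ha, rfl⟩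
      have : L.track a ∈ {i : Fin t | ∃ v ∈ C₂.1, L.track v = i} := by
        rw [hcover C₂.1 C₂.2]; exact hmem
      obtain ⟨u, hu, htu⟩ := this
      have h1 : L.pos a ≤ L.pos u := h12 a ha u hu htu.symm
      have h2 : L.pos u ≤ L.pos a := h21 u hu a ha htu
      have : a = u := L.inj a u htu.symm (le_antisymm h1 h2)
      exact this ▸ hu
    · intro a ha
      have hmem : L.track a ∈ Lset := by
        rw [← hcover C₂.1 C₂.2]; exact ⟨a, ha, rfl⟩
      have : L.track a ∈ {i : Fin t | ∃ v ∈ C₁.1, L.track v = i} := by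
        rw [hcover C₁.1 C₁.2]; exact hmem
      obtain ⟨u, hu, htu⟩ := this
      have h1 : L.pos a ≤ L.pos u := h21 a ha u hu htu.symm
      have h2 : L.pos u ≤ L.pos a := h12 u hu a ha htu
      have : a = u := L.inj a u htu.symm (le_antisymm h1 h2)
      exact this ▸ hu
  · -- total
    intro C₁ C₂
    by_cases h : ∀ a ∈ C₁.1, ∀ b ∈ C₂.1, L.track a = L.track b → L.pos a ≤ L.pos b
    · exact Or.inl h
    · push_neg at h
      obtain ⟨v, hv, w, hw, htr, hlt⟩ := h
      exact Or.inr (key C₂.1 C₂.2 C₁.1 C₁.2 w hw v hv htr.symm hlt)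
  · -- the nice-ordering property
    intro C₁ C₂ v w hv hw htr hlt
    exact key C₁.1 C₁.2 C₂.1 C₂.2 v hv w hw htr hlt
end

section
/- For every integer k ≥ 0 there is a graph G_k with tree-width at most k and track-number tn(G_k) = (k+1)(k+2)/2. Consequently, the maximum track-number of graphs of tree-width k is at least quadratic in k. -/
open SimpleGraph

/-- A tree-decomposition of `G`: a (finite) tree together with bags `bag x ⊆ V`
such that every vertex is in some bag, every edge has both end-vertices in a common
bag, and for every vertex the set of nodes whose bag contains it induces a connected
subtree. -/
structure TreeDecomp (V : Type) (G : SimpleGraph V) where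
  /-- the index type of the nodes of the tree -/
  ι : Type
  finι : Fintype ι
  /-- the tree -/
  tree : SimpleGraph ι
  isTree : tree.IsTree
  /-- the bags -/
  bag : ι → Set V
  cover : ∀ v : V, ∃ x : ι, v ∈ bag x
  edgeCover : ∀ v w : V, G.Adj v w → ∃ x : ι, v ∈ bag x ∧ w ∈ bag x
  subtreeConnected : ∀ v : V, (tree.induce {x : ι | v ∈ bag x}).Connected

/-- The tree-width of `G`: the minimum width (one less than the maximum bag size)
of a tree-decomposition of `G`. -/
noncomputable def treewidth (V : Type) (G : SimpleGraph V) : ℕ :=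
  sInf {k : ℕ | ∃ D : TreeDecomp V G, ∀ x : D.ι, (D.bag x).ncard ≤ k + 1}

/-!
Write `tn k = (k+1)(k+2)/2`. The graph `G_{k+1}` consists of a `(k+1)`-clique `K`, apexes
`w_j` (`j < n = 2 tn k + 1`) adjacent to all of `K`, and copies `H_j` of `G_k` with `w_j` joined
to all of `H_j`.

Upper bounds. A tree-decomposition has root bag `K`, below it a bag `K ∪ {w_j}` for every `j`,
and below that the decomposition of `H_j` with `w_j` added to each bag. A layout puts each
clique vertex on its own track, all apexes in order on one more track, and lets all copies share
the `tn k` tracks of a layout of `G_k`, copy `j` occupying the `j`-th block of positions on each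
of them, so that no apex–copy edges cross.

Lower bound. The apexes avoid the `k + 1` clique tracks, so with fewer than `tn k + k + 2` tracks
three apexes `w_a < w_b < w_c` share a track by pigeonhole. A vertex of `H_b` cannot share a
track with a clique vertex `v`: its edge to `w_b` would cross `v w_a` or `v w_c`. Hence `H_b`
uses none of the `k + 2` tracks of `K` and `w_b`, and induction gives the contradiction
`tn k ≤ t - (k + 2)`.
-/

section ParentMap

variable {ι : Type} {p : ι → ι} {d : ι → ℕ} {r : ι}

lemma rank_iterate_le (hr : p r = r) (hd : ∀ a, a ≠ r → d (p a) < d a) (m : ℕ) (a : ι) :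
    d (p^[m] a) ≤ d a := by
  induction m with
  | zero => rfl
  | succ m ih =>
    rw [Function.iterate_succ_apply']
    refine le_trans ?_ ih
    by_cases h : p^[m] a = r
    · rw [h, hr]
    · exact (hd _ h).le

lemma ne_root_of_ne_parent (hr : p r = r) {a : ι} (ha : a ≠ p a) : a ≠ r :=
  fun h => ha (h ▸ hr.symm)

namespace SimpleGraph

def parentGraph (p : ι → ι) : SimpleGraph ι := SimpleGraph.fromRel fun a b => p a = b

lemma parentGraph_adj {a b : ι} : (parentGraph p).Adj a b ↔ a ≠ b ∧ (p a = b ∨ p b = a) :=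
  fromRel_adj _ a b

lemma parentGraph_adj_parent {a : ι} (h : d (p a) < d a) : (parentGraph p).Adj a (p a) :=
  parentGraph_adj.2 ⟨fun he => h.ne (congrArg d he.symm), Or.inl rfl⟩

lemma parentGraph_induce_reachable {S : Set ι} {s : ι} (hs : s ∈ S)
    (hS : ∀ a ∈ S, a ≠ s → p a ∈ S ∧ d (p a) < d a) (a : ι) (ha : a ∈ S) :
    ((parentGraph p).induce S).Reachable ⟨a, ha⟩ ⟨s, hs⟩ := by
  induction h : d a using Nat.strong_induction_on generalizing a with
  | _ m ih =>
    by_cases has : a = s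
    · subst has; rfl
    · obtain ⟨hpa, hlt⟩ := hS a ha has
      have hadj : ((parentGraph p).induce S).Adj ⟨a, ha⟩ ⟨p a, hpa⟩ :=
        parentGraph_adj_parent hlt
      exact hadj.reachable.trans (ih _ (h ▸ hlt) _ hpa rfl)

lemma parentGraph_induce_connected {S : Set ι} {s : ι} (hs : s ∈ S)
    (hS : ∀ a ∈ S, a ≠ s → p a ∈ S ∧ d (p a) < d a) :
    ((parentGraph p).induce S).Connected :=
  have : Nonempty S := ⟨⟨s, hs⟩⟩
  ⟨fun ⟨a, ha⟩ ⟨b, hb⟩ => (parentGraph_induce_reachable hs hS a ha).trans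
    (parentGraph_induce_reachable hs hS b hb).symm⟩

lemma parentGraph_connected (hd : ∀ a, a ≠ r → d (p a) < d a) : (parentGraph p).Connected :=
  (induceUnivIso _).connected_iff.1 <|
    parentGraph_induce_connected (Set.mem_univ r) fun a _ ha => ⟨Set.mem_univ _, hd a ha⟩

/-- The descendants of `a` are closed under every edge except the one from `a` to its parent. -/
lemma exists_iterate_eq_of_walk {a x y : ι} (q : (parentGraph p).Walk x y)
    (hq : s(a, p a) ∉ q.edges) (hx : ∃ m, p^[m] x = a) : ∃ m, p^[m] y = a := by
  induction q with
  | nil => exact hx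
  | @cons x z y hxz q ih =>
    rw [Walk.edges_cons, List.mem_cons, not_or] at hq
    refine ih hq.2 ?_
    obtain ⟨m, hm⟩ := hx
    obtain ⟨-, hpx | hpz⟩ := parentGraph_adj.1 hxz
    · cases m with
      | zero => exact absurd (by rw [← hm, ← hpx]; rfl) hq.1
      | succ m => exact ⟨m, by rwa [Function.iterate_succ_apply, hpx] at hm⟩
    · exact ⟨m + 1, by rw [Function.iterate_succ_apply, hpz, hm]⟩

lemma parentGraph_isBridge (hr : p r = r) (hd : ∀ a, a ≠ r → d (p a) < d a) {a : ι}
    (ha : a ≠ r) : (parentGraph p).IsBridge s(a, p a) := by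
  rw [isBridge_iff_forall_walk_mem_edges]
  intro q
  by_contra hq
  obtain ⟨m, hm⟩ := exists_iterate_eq_of_walk q hq ⟨0, rfl⟩
  have := rank_iterate_le hr hd m (p a)
  rw [hm] at this
  exact (hd a ha).not_ge this

lemma parentGraph_isTree (hr : p r = r) (hd : ∀ a, a ≠ r → d (p a) < d a) :
    (parentGraph p).IsTree := by
  refine ⟨parentGraph_connected hd, isAcyclic_iff_forall_adj_isBridge.2 fun a b hab => ?_⟩
  obtain ⟨hne, rfl | rfl⟩ := parentGraph_adj.1 hab
  · exact parentGraph_isBridge hr hd (ne_root_of_ne_parent hr hne)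
  · rw [Sym2.eq_swap]
    exact parentGraph_isBridge hr hd (ne_root_of_ne_parent hr hne.symm)

end SimpleGraph

end ParentMap

-- Tree-decompositions over a tree given by parent pointers, which makes trees easy to graft.
structure RootedTreeDecomp (V : Type) (G : SimpleGraph V) where
  ι : Type
  finι : Fintype ι
  parent : ι → ι
  root : ι
  rank : ι → ℕ
  parent_root : parent root = root
  rank_parent_lt : ∀ a, a ≠ root → rank (parent a) < rank a
  bag : ι → Set V
  cover : ∀ v : V, ∃ x : ι, v ∈ bag x
  edgeCover : ∀ v w : V, G.Adj v w → ∃ x : ι, v ∈ bag x ∧ w ∈ bag x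
  subtreeConnected : ∀ v : V, ((parentGraph parent).induce {x : ι | v ∈ bag x}).Connected

def RootedTreeDecomp.toTreeDecomp {V : Type} {G : SimpleGraph V} (D : RootedTreeDecomp V G) :
    TreeDecomp V G :=
  { D with
    tree := parentGraph D.parent
    isTree := parentGraph_isTree D.parent_root D.rank_parent_lt }

def RootedTreeDecomp.single (V : Type) (G : SimpleGraph V) : RootedTreeDecomp V G where
  ι := Unit
  finι := inferInstance
  parent := id
  root := ()
  rank _ := 0
  parent_root := rfl
  rank_parent_lt _ h := absurd rfl h
  bag _ := Set.univ
  cover _ := ⟨(), trivial⟩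
  edgeCover _ _ _ := ⟨(), trivial, trivial⟩
  subtreeConnected _ :=
    parentGraph_induce_connected (d := fun _ => 0) (s := ()) trivial fun _ _ h => (h rfl).elim

lemma Finset.exists_lt_lt_of_two_lt_card {α β : Type*} [LinearOrder β] {s : Finset α}
    {f : α → β} (hf : Set.InjOn f s) (hs : 2 < s.card) :
    ∃ a ∈ s, ∃ b ∈ s, ∃ c ∈ s, f a < f b ∧ f b < f c := by
  classical
  set t := s.image f
  have ht : 2 < t.card := by rwa [Finset.card_image_of_injOn hf]
  have hne : t.Nonempty := Finset.card_pos.1 (by omega)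
  obtain ⟨y, hy⟩ : ((t.erase (t.min' hne)).erase (t.max' hne)).Nonempty := by
    rw [← Finset.card_pos]
    have h1 := Finset.pred_card_le_card_erase (s := t) (a := t.min' hne)
    have h2 := Finset.pred_card_le_card_erase (s := t.erase (t.min' hne)) (a := t.max' hne)
    omega
  obtain ⟨hy_max, hy_min⟩ := Finset.mem_erase.1 hy
  obtain ⟨a, ha, hfa⟩ := Finset.mem_image.1 (t.min'_mem hne)
  obtain ⟨b, hb, rfl⟩ := Finset.mem_image.1 (Finset.mem_of_mem_erase hy_min)
  obtain ⟨c, hc, hfc⟩ := Finset.mem_image.1 (t.max'_mem hne)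
  refine ⟨a, ha, b, hb, c, hc, hfa ▸ t.min'_lt_of_mem_erase_min' hne hy_min, hfc ▸ ?_⟩
  exact t.lt_max'_of_mem_erase_max' hne
    (Finset.mem_erase.2 ⟨hy_max, Finset.mem_image_of_mem f hb⟩)

lemma Nat.mul_add_lt_mul_add_iff {B a b p q : ℕ} (hp : p < B) (hq : q < B) :
    a * B + p < b * B + q ↔ a < b ∨ a = b ∧ p < q := by
  have block_lt : ∀ {a b p q : ℕ}, p < B → a < b → a * B + p < b * B + q := by
    intro a b p q hp hab
    have := Nat.mul_le_mul_right B hab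
    rw [Nat.succ_mul] at this
    omega
  refine ⟨fun h => ?_, ?_⟩
  · rcases lt_trichotomy a b with hab | rfl | hab
    · exact Or.inl hab
    · exact Or.inr ⟨rfl, by omega⟩
    · exact absurd (block_lt hq hab) h.not_gt
  · rintro (hab | ⟨rfl, hpq⟩)
    · exact block_lt hp hab
    · omega

lemma triangle_succ (k : ℕ) :
    (k + 1 + 1) * (k + 1 + 2) / 2 = (k + 1) * (k + 2) / 2 + (k + 2) := by
  rw [show (k + 1 + 1) * (k + 1 + 2) = (k + 1) * (k + 2) + 2 * (k + 2) by ring,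
    Nat.add_mul_div_left _ _ two_pos]

namespace TrackLayout

variable {V W : Type} {G : SimpleGraph V} {H : SimpleGraph W} {t s : ℕ}

def comap (L : TrackLayout W H t) (f : G →g H) (hf : Function.Injective f) :
    TrackLayout V G t where
  track v := L.track (f v)
  pos v := L.pos (f v)
  inj _ _ h₁ h₂ := hf (L.inj _ _ h₁ h₂)
  proper _ _ h := L.proper _ _ (f.map_adj h)
  noX _ _ _ _ hvw hxy := L.noX _ _ _ _ (f.map_adj hvw) (f.map_adj hxy)

def relabel (L : TrackLayout V G t) (τ : V → Fin s)
    (hτ : ∀ v w, τ v = τ w ↔ L.track v = L.track w) : TrackLayout V G s where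
  track := τ
  pos := L.pos
  inj v w h := L.inj v w ((hτ v w).1 h)
  proper v w h hc := L.proper v w h ((hτ v w).1 hc)
  noX v w x y hvw hxy h₁ h₂ h₃ :=
    L.noX v w x y hvw hxy ((hτ _ _).1 h₁) ((hτ _ _).1 h₂) (mt (hτ _ _).2 h₃)

lemma nonempty_sub_card_of_track_notMem (L : TrackLayout V G t) (S : Finset (Fin t))
    (hS : ∀ v, L.track v ∉ S) :
    Nonempty (TrackLayout V G (t - S.card)) := by
  have hcard : Sᶜ.card = t - S.card := by rw [Finset.card_compl, Fintype.card_fin]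
  let e := Sᶜ.equivFin.trans (finCongr hcard)
  refine ⟨L.relabel (fun v => e ⟨L.track v, Finset.mem_compl.2 (hS v)⟩) fun v w => ?_⟩
  rw [e.apply_eq_iff_eq, Subtype.mk.injEq]

lemma track_ne_of_between (L : TrackLayout V G t) {u v a b c : V} (huv : u ≠ v)
    (hva : G.Adj v a) (hvc : G.Adj v c) (hub : G.Adj u b)
    (hab : L.track a = L.track b) (hbc : L.track b = L.track c)
    (ha : L.pos a < L.pos b) (hc : L.pos b < L.pos c) : L.track u ≠ L.track v := by
  intro h
  rcases lt_trichotomy (L.pos u) (L.pos v) with hlt | heq | hgt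
  · exact L.noX u b v a hub hva h hab.symm (L.proper u b hub) hlt ha
  · exact huv (L.inj u v h heq)
  · exact L.noX v c u b hvc hub h.symm hbc.symm (L.proper v c hvc) hgt hc

end TrackLayout

-- `clique i`, `apex j` and `copy j u` are the paper's `v_i`, `w_j` and the vertex `u` of `H_j`.
inductive StepVertex (V : Type) (k n : ℕ)
  | clique (i : Fin (k + 1))
  | apex (j : Fin n)
  | copy (j : Fin n) (u : V)
  deriving Fintype

namespace StepVertex

variable {V : Type} {k n : ℕ}

def Adj (G : SimpleGraph V) : StepVertex V k n → StepVertex V k n → Prop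
  | clique i, clique i' => i ≠ i'
  | clique _, apex _ => True
  | apex _, clique _ => True
  | apex j, copy j' _ => j = j'
  | copy j _, apex j' => j = j'
  | copy j u, copy j' u' => j = j' ∧ G.Adj u u'
  | _, _ => False

end StepVertex

open StepVertex

def stepGraph {V : Type} (G : SimpleGraph V) (k n : ℕ) : SimpleGraph (StepVertex V k n) where
  Adj := StepVertex.Adj G
  symm := by
    constructor
    rintro (i | j | ⟨j, u⟩) (i' | j' | ⟨j', u'⟩) h <;> simp only [StepVertex.Adj] at h ⊢
    all_goals first | trivial | exact h.symm | exact ⟨h.1.symm, h.2.symm⟩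
  loopless := by
    constructor
    rintro (i | j | ⟨j, u⟩) h <;> simp only [StepVertex.Adj] at h
    · exact h rfl
    · exact G.loopless.irrefl _ h.2

section Decomposition

variable {V : Type} {G : SimpleGraph V} {k n : ℕ} {ι : Type} {p : ι → ι} {r : ι}
  {d : ι → ℕ}

-- Node `none` is the root, `some (j, none)` its `j`-th child, and `some (j, some x)` the node `x`
-- of the `j`-th copy of the tree below that child.
open Classical in
noncomputable def stepParent (p : ι → ι) (r : ι) :
    Option (Fin n × Option ι) → Option (Fin n × Option ι)
  | none => none
  | some (_, none) => none
  | some (j, some x) => if x = r then some (j, none) else some (j, some (p x))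

def stepRank (d : ι → ℕ) : Option (Fin n × Option ι) → ℕ
  | none => 0
  | some (_, none) => 1
  | some (_, some x) => d x + 2

lemma stepParent_some_some {j : Fin n} {x : ι} (hx : x ≠ r) :
    stepParent p r (some (j, some x)) = some (j, some (p x)) := by
  simp [stepParent, hx]

lemma stepRank_stepParent_lt (hd : ∀ a, a ≠ r → d (p a) < d a) :
    ∀ a : Option (Fin n × Option ι), a ≠ none → stepRank d (stepParent p r a) < stepRank d a
  | none, h => absurd rfl h
  | some (_, none), _ => Nat.zero_lt_one
  | some (j, some x), _ => by
    by_cases hx : x = r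
    · simp [stepParent, stepRank, hx]
    · simpa [stepParent_some_some hx, stepRank] using hd x hx

lemma parentGraph_stepParent_adj (hr : p r = r) (j : Fin n) {x y : ι}
    (h : (parentGraph p).Adj x y) :
    (parentGraph (stepParent p r)).Adj (some (j, some x)) (some (j, some y)) := by
  obtain ⟨hne, rfl | rfl⟩ := parentGraph_adj.1 h
  · exact parentGraph_adj.2
      ⟨by simpa using hne, Or.inl (stepParent_some_some (ne_root_of_ne_parent hr hne))⟩
  · exact parentGraph_adj.2
      ⟨by simpa using hne, Or.inr (stepParent_some_some (ne_root_of_ne_parent hr hne.symm))⟩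

def stepBag (bag : ι → Set V) : Option (Fin n × Option ι) → Set (StepVertex V k n)
  | none => Set.range clique
  | some (j, none) => insert (apex j) (Set.range clique)
  | some (j, some x) => insert (apex j) (copy j '' bag x)

lemma ncard_stepBag_le {bag : ι → Set V} (hbag : ∀ x, (bag x).ncard ≤ k + 1) :
    ∀ a : Option (Fin n × Option ι), (stepBag (k := k) bag a).ncard ≤ k + 2 := by
  have hclique : (Set.range (clique : Fin (k + 1) → StepVertex V k n)).ncard = k + 1 := by
    rw [Set.ncard_range_of_injective fun _ _ h => clique.inj h, Nat.card_eq_fintype_card,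
      Fintype.card_fin]
  rintro (_ | ⟨j, _ | x⟩)
  · exact hclique.trans_le (Nat.le_succ _)
  · exact (Set.ncard_insert_le _ _).trans (by rw [hclique])
  · refine (Set.ncard_insert_le _ _).trans ?_
    rw [Set.ncard_image_of_injective _ fun _ _ h => (copy.inj h).2]
    exact Nat.add_le_add_right (hbag x) 1

lemma connected_stepBag_clique (bag : ι → Set V) (i : Fin (k + 1)) :
    ((parentGraph (stepParent (n := n) p r)).induce
      {a | clique i ∈ stepBag bag a}).Connected := by
  refine parentGraph_induce_connected (d := stepRank fun _ => 0) (s := none) ⟨i, rfl⟩ ?_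
  rintro (_ | ⟨j, _ | x⟩) ha hne
  · exact absurd rfl hne
  · exact ⟨⟨i, rfl⟩, Nat.zero_lt_one⟩
  · simp [stepBag] at ha

lemma connected_stepBag_apex (hd : ∀ a, a ≠ r → d (p a) < d a) (bag : ι → Set V)
    (j : Fin n) :
    ((parentGraph (stepParent p r)).induce {a | apex j ∈ stepBag (k := k) bag a}).Connected := by
  refine parentGraph_induce_connected (d := stepRank d) (s := some (j, none))
    (Set.mem_insert _ _) ?_
  rintro (_ | ⟨j', _ | x⟩) ha hne
  · simp [stepBag] at ha
  · obtain h | ⟨_, h⟩ := ha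
    · exact absurd (by rw [apex.inj h]) hne
    · cases h
  · obtain h | ⟨_, _, h⟩ := ha
    · obtain rfl := apex.inj h
      refine ⟨?_, stepRank_stepParent_lt hd _ nofun⟩
      by_cases hx : x = r
      · simp [stepParent, hx, stepBag]
      · simp [stepParent_some_some hx, stepBag]
    · cases h

lemma connected_stepBag_copy (hr : p r = r) {bag : ι → Set V} (j : Fin n) (u : V)
    (h : ((parentGraph p).induce {x | u ∈ bag x}).Connected) :
    ((parentGraph (stepParent p r)).induce
      {a | copy j u ∈ stepBag (k := k) bag a}).Connected := by
  refine h.map ⟨fun x => ⟨some (j, some x.1), Set.mem_insert_of_mem _ ⟨u, x.2, rfl⟩⟩,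
    fun hxy => parentGraph_stepParent_adj hr j hxy⟩ ?_
  rintro ⟨_ | ⟨j', _ | x⟩, ha⟩
  · simp [stepBag] at ha
  · simp [stepBag] at ha
  · obtain h | ⟨_, hx, h⟩ := ha
    · cases h
    · obtain ⟨rfl, rfl⟩ := copy.inj h
      exact ⟨⟨x, hx⟩, rfl⟩

lemma exists_mem_stepBag {bag : ι → Set V} (hcover : ∀ u, ∃ x, u ∈ bag x) :
    ∀ v : StepVertex V k n, ∃ a : Option (Fin n × Option ι), v ∈ stepBag bag a
  | clique i => ⟨none, i, rfl⟩
  | apex j => ⟨some (j, none), Set.mem_insert _ _⟩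
  | copy j u =>
    let ⟨x, hx⟩ := hcover u
    ⟨some (j, some x), Set.mem_insert_of_mem _ ⟨u, hx, rfl⟩⟩

lemma exists_stepBag_of_adj {bag : ι → Set V} (hcover : ∀ u, ∃ x, u ∈ bag x)
    (hedge : ∀ u u', G.Adj u u' → ∃ x, u ∈ bag x ∧ u' ∈ bag x) :
    ∀ v w : StepVertex V k n, (stepGraph G k n).Adj v w →
      ∃ a : Option (Fin n × Option ι), v ∈ stepBag bag a ∧ w ∈ stepBag bag a := by
  rintro (i | j | ⟨j, u⟩) (i' | j' | ⟨j', u'⟩) h <;>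
    simp only [stepGraph, StepVertex.Adj] at h
  · exact ⟨none, ⟨i, rfl⟩, ⟨i', rfl⟩⟩
  · exact ⟨some (j', none), Set.mem_insert_of_mem _ ⟨i, rfl⟩, Set.mem_insert _ _⟩
  · exact ⟨some (j, none), Set.mem_insert _ _, Set.mem_insert_of_mem _ ⟨i', rfl⟩⟩
  · subst h
    obtain ⟨x, hx⟩ := hcover u'
    exact ⟨some (j, some x), Set.mem_insert _ _, Set.mem_insert_of_mem _ ⟨u', hx, rfl⟩⟩
  · subst h
    obtain ⟨x, hx⟩ := hcover u
    exact ⟨some (j, some x), Set.mem_insert_of_mem _ ⟨u, hx, rfl⟩, Set.mem_insert _ _⟩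
  · obtain ⟨rfl, h⟩ := h
    obtain ⟨x, hx, hx'⟩ := hedge u u' h
    exact ⟨some (j, some x), Set.mem_insert_of_mem _ ⟨u, hx, rfl⟩,
      Set.mem_insert_of_mem _ ⟨u', hx', rfl⟩⟩

noncomputable def RootedTreeDecomp.step (D : RootedTreeDecomp V G) (k n : ℕ) :
    RootedTreeDecomp (StepVertex V k n) (stepGraph G k n) where
  ι := Option (Fin n × Option D.ι)
  finι := letI := D.finι; inferInstance
  parent := stepParent D.parent D.root
  root := none
  rank := stepRank D.rank
  parent_root := rfl
  rank_parent_lt := stepRank_stepParent_lt D.rank_parent_lt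
  bag := stepBag D.bag
  cover := exists_mem_stepBag D.cover
  edgeCover := exists_stepBag_of_adj D.cover D.edgeCover
  subtreeConnected
    | clique i => connected_stepBag_clique D.bag i
    | apex j => connected_stepBag_apex D.rank_parent_lt D.bag j
    | copy j u => connected_stepBag_copy D.parent_root j u (D.subtreeConnected u)

end Decomposition

section LowerBound

variable {V : Type} {G : SimpleGraph V} {k n t : ℕ}

def copyHom (G : SimpleGraph V) (k : ℕ) (j : Fin n) : G →g stepGraph G k n where
  toFun := copy j
  map_rel' h := ⟨rfl, h⟩

lemma copyHom_injective (j : Fin n) : Function.Injective (copyHom G k j) :=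
  fun _ _ h => (copy.inj h).2

section

variable (L : TrackLayout (StepVertex V k n) (stepGraph G k n) t)

def cliqueTracks : Finset (Fin t) := Finset.univ.image fun i => L.track (clique i)

lemma card_cliqueTracks : (cliqueTracks L).card = k + 1 := by
  rw [cliqueTracks, Finset.card_image_of_injective, Finset.card_univ, Fintype.card_fin]
  intro i i' h
  by_contra hne
  exact L.proper (clique i) (clique i') hne h

lemma track_apex_notMem_cliqueTracks (j : Fin n) : L.track (apex j) ∉ cliqueTracks L := by
  simp only [cliqueTracks, Finset.mem_image, Finset.mem_univ, true_and, not_exists]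
  exact fun i => L.proper (clique i) (apex j) trivial

lemma exists_apex_between (hn : 2 * (t - (k + 1)) < n) :
    ∃ a b c : Fin n, L.track (apex a) = L.track (apex b) ∧
      L.track (apex b) = L.track (apex c) ∧
      L.pos (apex a) < L.pos (apex b) ∧ L.pos (apex b) < L.pos (apex c) := by
  classical
  have hmaps : ∀ j ∈ (Finset.univ : Finset (Fin n)), L.track (apex j) ∈ (cliqueTracks L)ᶜ :=
    fun j _ => Finset.mem_compl.2 (track_apex_notMem_cliqueTracks L j)
  have hcard : (cliqueTracks L)ᶜ.card * 2 < (Finset.univ : Finset (Fin n)).card := by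
    rw [Finset.card_compl, Fintype.card_fin, card_cliqueTracks, Finset.card_univ,
      Fintype.card_fin]
    omega
  obtain ⟨τ, -, hτ⟩ := Finset.exists_lt_card_fiber_of_mul_lt_card_of_maps_to hmaps hcard
  have hinj : Set.InjOn (fun j => L.pos (apex j))
      (Finset.univ.filter fun j : Fin n => L.track (apex j) = τ) := by
    intro j hj j' hj' h
    simp only [Finset.coe_filter, Finset.mem_univ, true_and] at hj hj'
    exact (apex.inj (L.inj _ _ (hj.trans hj'.symm) h))
  obtain ⟨a, ha, b, hb, c, hc, hab, hbc⟩ := Finset.exists_lt_lt_of_two_lt_card hinj hτ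
  simp only [Finset.mem_filter, Finset.mem_univ, true_and] at ha hb hc
  exact ⟨a, b, c, ha.trans hb.symm, hb.trans hc.symm, hab, hbc⟩

lemma track_copy_notMem {a b c : Fin n} (hab : L.track (apex a) = L.track (apex b))
    (hbc : L.track (apex b) = L.track (apex c)) (ha : L.pos (apex a) < L.pos (apex b))
    (hc : L.pos (apex b) < L.pos (apex c)) (u : V) :
    L.track (copy b u) ∉ insert (L.track (apex b)) (cliqueTracks L) := by
  simp only [cliqueTracks, Finset.mem_insert, Finset.mem_image, Finset.mem_univ, true_and,
    not_or, not_exists]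
  refine ⟨L.proper (copy b u) (apex b) rfl, fun i hi => ?_⟩
  exact L.track_ne_of_between (u := copy b u) (v := clique i) (a := apex a) (b := apex b)
    (c := apex c) nofun trivial trivial rfl hab hbc ha hc hi.symm

end

lemma add_le_of_trackLayout_stepGraph {m : ℕ}
    (L : TrackLayout (StepVertex V k n) (stepGraph G k n) t) (hn : 2 * m < n)
    (hG : ∀ s, Nonempty (TrackLayout V G s) → m ≤ s) : m + (k + 2) ≤ t := by
  by_contra! ht
  obtain ⟨a, b, c, hab, hbc, ha, hc⟩ := exists_apex_between L (by omega)
  have hcard : (insert (L.track (apex b)) (cliqueTracks L)).card = k + 2 := by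
    rw [Finset.card_insert_of_notMem (track_apex_notMem_cliqueTracks L b), card_cliqueTracks]
  have hkt : k + 2 ≤ t := hcard ▸ (Finset.card_le_univ _).trans_eq (Fintype.card_fin t)
  have := hG _ ((L.comap (copyHom G k b) (copyHom_injective b)).nonempty_sub_card_of_track_notMem _
    (track_copy_notMem L hab hbc ha hc))
  rw [hcard] at this
  omega

end LowerBound

section UpperBound

variable {V : Type} {G : SimpleGraph V} {k n m : ℕ}

def stepTrack (L : TrackLayout V G m) : StepVertex V k n → Fin (k + 2 + m)
  | clique i => ⟨i, by omega⟩
  | apex _ => ⟨k + 1, by omega⟩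
  | copy _ u => ⟨k + 2 + L.track u, by omega⟩

def stepPos (L : TrackLayout V G m) (B : ℕ) : StepVertex V k n → ℕ
  | clique _ => 0
  | apex j => j
  | copy j u => j * B + L.pos u

def stepLayout (L : TrackLayout V G m) (B : ℕ) (hB : ∀ u, L.pos u < B) :
    TrackLayout (StepVertex V k n) (stepGraph G k n) (k + 2 + m) where
  track := stepTrack L
  pos := stepPos L B
  inj := by
    rintro (i | j | ⟨j, u⟩) (i' | j' | ⟨j', u'⟩) h₁ h₂ <;>
      simp only [stepTrack, stepPos, Fin.ext_iff] at h₁ h₂ <;> (try omega)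
    · rw [Fin.ext h₁]
    · rw [Fin.ext h₂]
    · have h₃ := (Nat.mul_add_lt_mul_add_iff (hB u) (hB u')).not.1 h₂.not_lt
      have h₄ := (Nat.mul_add_lt_mul_add_iff (hB u') (hB u)).not.1 h₂.not_gt
      obtain rfl : j = j' := Fin.ext (by omega)
      rw [L.inj u u' (Fin.ext (by omega)) (by omega)]
  proper := by
    rintro (i | j | ⟨j, u⟩) (i' | j' | ⟨j', u'⟩) h <;>
      simp only [stepGraph, StepVertex.Adj, stepTrack, Fin.ext_iff, ne_eq] at h ⊢ <;> (try omega)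
    exact fun hc => L.proper u u' h.2 (Fin.ext (by omega))
  noX := by
    rintro (iv | jv | ⟨jv, uv⟩) (iw | jw | ⟨jw, uw⟩) (ix | jx | ⟨jx, ux⟩)
      (iy | jy | ⟨jy, uy⟩) hvw hxy h₁ h₂ h₃ h₄ h₅ <;>
      simp only [stepGraph, StepVertex.Adj, stepTrack, stepPos, Fin.ext_iff, ne_eq,
        Nat.mul_add_lt_mul_add_iff (hB _) (hB _)] at hvw hxy h₁ h₂ h₃ h₄ h₅ <;>
      (try omega)
    obtain ⟨hjvw, hvw⟩ := hvw
    obtain ⟨hjxy, hxy⟩ := hxy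
    exact L.noX uv uw ux uy hvw hxy (Fin.ext (by omega)) (Fin.ext (by omega))
      (fun h => h₃ (by rw [h])) (by omega) (by omega)

lemma nonempty_trackLayout_stepGraph [Fintype V] (L : TrackLayout V G m) :
    Nonempty (TrackLayout (StepVertex V k n) (stepGraph G k n) (m + (k + 2))) :=
  ⟨(add_comm (k + 2) m) ▸ stepLayout L (Finset.univ.sup L.pos + 1)
    fun u => Nat.lt_succ_of_le (Finset.le_sup (Finset.mem_univ u))⟩

end UpperBound

-- `n = 2 tn k + 1` is the paper's `2((k+2)(k+3)/2 - 1 - (k+1)) + 1`.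
def trackVertex : ℕ → Type
  | 0 => Unit
  | k + 1 => StepVertex (trackVertex k) k (2 * ((k + 1) * (k + 2) / 2) + 1)

instance instFintypeTrackVertex : (k : ℕ) → Fintype (trackVertex k)
  | 0 => inferInstanceAs (Fintype Unit)
  | k + 1 =>
    have := instFintypeTrackVertex k
    inferInstanceAs (Fintype (StepVertex (trackVertex k) k _))

def trackGraph : (k : ℕ) → SimpleGraph (trackVertex k)
  | 0 => ⊥
  | k + 1 => stepGraph (trackGraph k) k _

theorem exists_rootedTreeDecomp_trackGraph :
    ∀ k, ∃ D : RootedTreeDecomp (trackVertex k) (trackGraph k), ∀ x, (D.bag x).ncard ≤ k + 1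
  | 0 => ⟨RootedTreeDecomp.single _ _, fun _ => by simp [RootedTreeDecomp.single, trackVertex]⟩
  | k + 1 =>
    let ⟨D, hD⟩ := exists_rootedTreeDecomp_trackGraph k
    ⟨D.step k _, ncard_stepBag_le hD⟩

theorem nonempty_trackLayout_trackGraph :
    ∀ k, Nonempty (TrackLayout (trackVertex k) (trackGraph k) ((k + 1) * (k + 2) / 2))
  | 0 => ⟨{
      track _ := 0
      pos _ := 0
      inj _ _ _ _ := rfl
      proper _ _ h := h.elim
      noX _ _ _ _ h := h.elim }⟩
  | k + 1 =>
    let ⟨L⟩ := nonempty_trackLayout_trackGraph k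
    triangle_succ k ▸ nonempty_trackLayout_stepGraph L

theorem le_of_trackLayout_trackGraph :
    ∀ k t, Nonempty (TrackLayout (trackVertex k) (trackGraph k) t) → (k + 1) * (k + 2) / 2 ≤ t
  | 0, _, ⟨L⟩ => (L.track ()).pos
  | k + 1, _, ⟨L⟩ => triangle_succ k ▸
    add_le_of_trackLayout_stepGraph L (by omega) (le_of_trackLayout_trackGraph k)

/-- For every integer `k ≥ 0` there is a (finite) graph `G_k` with
tree-width at most `k` and track-number exactly `(k+1)(k+2)/2`. Consequently, the
maximum track-number of graphs of tree-width `k` is at least quadratic in `k`. -/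
theorem exists_treewidth_graph_with_quadratic_trackNumber (k : ℕ) :
    ∃ (V : Type) (_ : Fintype V) (G : SimpleGraph V),
      treewidth V G ≤ k ∧ trackNumber V G = (k + 1) * (k + 2) / 2 := by
  obtain ⟨D, hD⟩ := exists_rootedTreeDecomp_trackGraph k
  refine ⟨trackVertex k, inferInstance, trackGraph k, Nat.sInf_le ⟨D.toTreeDecomp, hD⟩, ?_⟩
  exact le_antisymm (Nat.sInf_le (nonempty_trackLayout_trackGraph k))
    (le_csInf ⟨_, nonempty_trackLayout_trackGraph k⟩ (le_of_trackLayout_trackGraph k))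
end
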